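/- arXiv:math/0508397 — 2 statements merged into one kernel-verified Lean document; each statement's English description precedes it below -/
import Mathlib

section
/- For m ≥ 2, the finite atomic sequence (1, m, m+1) is realised, uniquely up to isomorphism, by the poset {0̂; x_1,...,x_{m+1}; y_1,...,y_{m+1}; 1̂} with cover relations 0̂ < x_i, y_j < 1̂, and x_i < y_j if and only if i ≠ j; however, for m ≥ 3 this interval cannot be extended to any binomial interval of greater length, so the infinite sequence (1, m, m+1, (m(m+1))^∞) satisfies condition (1) but is not realisable. -/
open Relation Filter Topology

/-- The set of saturated chains from `x` to `y`: lists whose consecutive entries are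
cover relations, starting at `x` and ending at `y`.  A chain of `n + 1` elements
corresponds to an interval of length `n`. -/
def CovChains {P : Type*} [PartialOrder P] (x y : P) : Set (List P) :=
  {l | l.Chain' (· ⋖ ·) ∧ l.head? = some x ∧ l.getLast? = some y}

/-- `x` has rank `n` over the bottom element `b` : some saturated chain from `b` to `x`
has `n + 1` elements. -/
def HasRankFrom {P : Type*} [PartialOrder P] (b x : P) (n : ℕ) : Prop :=
  ∃ l ∈ CovChains b x, l.length = n + 1

/-- The rank level `X_i`. -/
def levelSet {P : Type*} [PartialOrder P] (b : P) (i : ℕ) : Set P :=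
  {x | HasRankFrom b x i}

/-- A poset is strongly confluent if it is the union of the intervals `[⊥, x i]` along
an infinite (strictly increasing) chain `x 1 < x 2 < ...`. -/
def StronglyConfluent (P : Type*) [Preorder P] : Prop :=
  ∃ x : ℕ → P, StrictMono x ∧ ∀ p : P, ∃ i, p ≤ x i

/-- An (infinite, downward bounded, directed, locally finite) binomial poset with bottom
element `b` and atomic function `A` : graded, with intervals of every length, where the
number of maximal chains in an interval only depends on its length, and every `n`-interval
(`n ≥ 1`) has exactly `A n` atoms. -/
structure IsBinomialPoset (P : Type*) [PartialOrder P] (b : P) (A : ℕ → ℕ) : Prop where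
  bot_le : ∀ x : P, b ≤ x
  directed : ∀ x y : P, ∃ z : P, x ≤ z ∧ y ≤ z
  locFin : ∀ x y : P, (Set.Icc x y).Finite
  chain_nonempty : ∀ x y : P, x ≤ y → (CovChains x y).Nonempty
  graded : ∀ x y : P, ∀ l ∈ CovChains x y, ∀ l' ∈ CovChains x y, l.length = l'.length
  allLengths : ∀ n : ℕ, ∃ x : P, HasRankFrom b x n
  count : ∀ (x y x' y' : P) (n : ℕ), (∃ l ∈ CovChains x y, l.length = n + 1) →
    (∃ l ∈ CovChains x' y', l.length = n + 1) →
    (CovChains x y).ncard = (CovChains x' y').ncard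
  atoms : ∀ (x y : P) (n : ℕ), 1 ≤ n → (∃ l ∈ CovChains x y, l.length = n + 1) →
    {z : P | x ⋖ z ∧ z ≤ y}.ncard = A n

/-- The generalised factorial function `B n = A 1 * A 2 * ... * A n`. -/
def Bfun (A : ℕ → ℕ) (n : ℕ) : ℕ := ∏ i ∈ Finset.Icc 1 n, A i

/-- A bundled poset with a distinguished bottom element. -/
structure BinPoset where
  carrier : Type
  [po : PartialOrder carrier]
  bot : carrier

attribute [instance] BinPoset.po

/-- The atomic sequence `(1, 1, 2, 2, 2, ...)`. -/
def A112 : ℕ → ℕ := fun n => if n ≤ 2 then 1 else 2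
/-- A bundled poset with distinguished bottom and top elements. -/
structure BddPoset where
  carrier : Type
  [po : PartialOrder carrier]
  bot : carrier
  top : carrier

attribute [instance] BddPoset.po

/-- `P` (with bottom `b` and top `t`) is a finite binomial interval of length `n` with
atomic function `A` : a finite bounded graded poset of rank `n` in which every
`k`-interval (`1 ≤ k ≤ n`) has exactly `A k` atoms. -/
def IsBinomialIntervalOn (P : Type*) [PartialOrder P] (b t : P) (A : ℕ → ℕ) (n : ℕ) :
    Prop :=
  Finite P ∧
  (∀ x : P, b ≤ x ∧ x ≤ t) ∧
  (∀ l ∈ CovChains b t, l.length = n + 1) ∧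
  (∀ x y : P, x ≤ y → (CovChains x y).Nonempty) ∧
  (∀ x y : P, ∀ l ∈ CovChains x y, ∀ l' ∈ CovChains x y, l.length = l'.length) ∧
  (∀ (x y : P) (k : ℕ), 1 ≤ k → (∃ l ∈ CovChains x y, l.length = k + 1) →
    {z : P | x ⋖ z ∧ z ≤ y}.ncard = A k)

/-- The atomic sequence `(1, 2, ..., n-1, aN)`. -/
def AtomSeqTrunc (n aN : ℕ) : ℕ → ℕ := fun k => if k = n then aN else k
/-- The first binomial poset compatibility condition (1): `a 1 = 1`, the sequence is
positive and weakly increasing, and all generalized binomial coefficients are integers. -/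
def Cond1 (A : ℕ → ℕ) : Prop :=
  A 1 = 1 ∧ (∀ i : ℕ, 1 ≤ i → 0 < A i) ∧ (∀ i : ℕ, 1 ≤ i → A i ≤ A (i + 1)) ∧
  ∀ i j : ℕ, 1 ≤ i → 1 ≤ j →
    (∏ l ∈ Finset.Icc 1 i, A l) ∣ ∏ l ∈ Finset.Icc (j + 1) (j + i), A l
/-- The middle two levels of the poset realising `(1, m, m+1)` : elements
`x_1, ..., x_{m+1}` (with `isY = false`) and `y_1, ..., y_{m+1}` (with `isY = true`),
where `x i < y j` iff `i ≠ j`. -/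
structure Mid3 (m : ℕ) where
  isY : Bool
  idx : Fin (m + 1)

instance (m : ℕ) : PartialOrder (Mid3 m) where
  le p q := p = q ∨ (p.isY = false ∧ q.isY = true ∧ p.idx ≠ q.idx)
  le_refl p := Or.inl rfl
  le_trans p q r h h' := by
    rcases h with rfl | ⟨h1, h2, h3⟩
    · exact h'
    · rcases h' with rfl | ⟨k1, k2, k3⟩
      · exact Or.inr ⟨h1, h2, h3⟩
      · rw [h2] at k1; simp at k1
  le_antisymm p q h h' := by
    rcases h with rfl | ⟨h1, h2, h3⟩
    · rfl
    · rcases h' with rfl | ⟨k1, k2, k3⟩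
      · rfl
      · rw [h2] at k1; simp at k1

/-- The poset `{0̂; x_1, ..., x_{m+1}; y_1, ..., y_{m+1}; 1̂}` with `x i < y j` iff
`i ≠ j`. -/
abbrev T3 (m : ℕ) : Type := WithBot (WithTop (Mid3 m))

/-- The finite atomic sequence `(1, m, m+1)`. -/
def A3seq (m : ℕ) : ℕ → ℕ := fun k => if k = 1 then 1 else if k = 2 then m else m + 1

/-- The infinite sequence `(1, m, m+1, (m(m+1))^∞)`. -/
def A3seqInf (m : ℕ) : ℕ → ℕ := fun k =>
  if k = 1 then 1 else if k = 2 then m else if k = 3 then m + 1 else m * (m + 1)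

namespace CovChains
variable {P : Type*} [PartialOrder P] {x y z : P} {l l1 l2 : List P}

lemma singleton_mem (x : P) : [x] ∈ CovChains x x := ⟨List.isChain_singleton x, rfl, rfl⟩

lemma ne_nil (h : l ∈ CovChains x y) : l ≠ [] := by
  rintro rfl; exact absurd h.2.1 (by simp)

lemma length_pos (h : l ∈ CovChains x y) : 0 < l.length :=
  List.length_pos_iff.2 (ne_nil h)

lemma eq_of_length_one (h : l ∈ CovChains x y) (hl : l.length = 1) : x = y := by
  obtain ⟨a, rfl⟩ := List.length_eq_one_iff.1 hl
  obtain ⟨-, h2, h3⟩ := h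
  simp only [List.head?_cons, List.getLast?_singleton, Option.some.injEq] at h2 h3
  exact h2.symm.trans h3

lemma cons_mem (hxa : x ⋖ z) (h : l ∈ CovChains z y) : (x :: l) ∈ CovChains x y := by
  obtain ⟨h1, h2, h3⟩ := h
  obtain ⟨a, t, rfl⟩ : ∃ a t, l = a :: t := by
    cases l with
    | nil => exact absurd h2 (by simp)
    | cons a t => exact ⟨a, t, rfl⟩
  simp only [List.head?_cons, Option.some.injEq] at h2
  subst h2
  exact ⟨List.isChain_cons_cons.2 ⟨hxa, h1⟩, rfl, by rw [List.getLast?_cons_cons]; exact h3⟩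

lemma destruct (h : l ∈ CovChains x y) (hl : 2 ≤ l.length) :
    ∃ a t, l = x :: a :: t ∧ x ⋖ a ∧ (a :: t) ∈ CovChains a y := by
  obtain ⟨h1, h2, h3⟩ := h
  match l, hl with
  | a0 :: a :: t, _ =>
    simp only [List.head?_cons, Option.some.injEq] at h2
    subst h2
    replace h1 := List.isChain_cons_cons.1 h1
    rw [List.getLast?_cons_cons] at h3
    exact ⟨a, t, rfl, h1.1, h1.2, rfl, h3⟩

lemma le_aux : ∀ (n : ℕ) {l : List P} {x y : P}, l ∈ CovChains x y → l.length = n → x ≤ y := by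
  intro n
  induction n using Nat.strong_induction_on with
  | _ n ih =>
    intro l x y h hl
    rcases Nat.lt_or_ge n 2 with h2 | h2
    · have h1 : n = 1 := by have := length_pos h; omega
      exact (eq_of_length_one h (hl.trans h1)).le
    · obtain ⟨a, t, he, hc, hm⟩ := destruct h (hl ▸ h2)
      refine hc.le.trans (ih (a :: t).length ?_ hm rfl)
      subst he; subst hl; simp

lemma le_of_mem (h : l ∈ CovChains x y) : x ≤ y := le_aux l.length h rfl

lemma covBy_of_length_two (h : l ∈ CovChains x y) (hl : l.length = 2) : x ⋖ y := by
  obtain ⟨a, t, he, hc, hm⟩ := destruct h (by omega)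
  have ht : t = [] := by subst he; simpa using hl
  subst ht
  exact (eq_of_length_one hm rfl) ▸ hc

lemma append_mem (h1 : l1 ∈ CovChains x y) (h2 : l2 ∈ CovChains y z) :
    (l1 ++ l2.tail) ∈ CovChains x z ∧
      (l1 ++ l2.tail).length + 1 = l1.length + l2.length := by
  have main : ∀ (n : ℕ) {l1 : List P} {x : P}, l1 ∈ CovChains x y → l1.length = n →
      (l1 ++ l2.tail) ∈ CovChains x z ∧
      (l1 ++ l2.tail).length + 1 = l1.length + l2.length := by
    intro n
    induction n using Nat.strong_induction_on with
    | _ n ih =>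
      intro l1 x h1 hl
      rcases Nat.lt_or_ge n 2 with hn | hn
      · have h1' : n = 1 := by have := length_pos h1; omega
        obtain ⟨a, rfl⟩ := List.length_eq_one_iff.1 (hl.trans h1')
        have hax : a = x := by
          have := h1.2.1
          simp only [List.head?_cons, Option.some.injEq] at this
          exact this
        subst hax
        have hxy : a = y := eq_of_length_one h1 (hl.trans h1')
        subst hxy
        obtain ⟨a', t', rfl⟩ : ∃ a' t', l2 = a' :: t' := by
          cases l2 with
          | nil => exact absurd (ne_nil h2) (by simp)
          | cons a' t' => exact ⟨a', t', rfl⟩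
        have ha' : a' = a := by
          have := h2.2.1
          simp only [List.head?_cons, Option.some.injEq] at this
          exact this
        subst ha'
        refine ⟨by simpa using h2, by simp; omega⟩
      · obtain ⟨a, t, he, hc, hm⟩ := destruct h1 (hl ▸ hn)
        obtain ⟨hmem, hlen⟩ := ih (a :: t).length (by subst he hl; simp) hm rfl
        subst he
        constructor
        · exact cons_mem hc hmem
        · simp only [List.cons_append, List.length_cons] at hlen ⊢
          omega
  exact main l1.length h1 rfl

lemma snoc_mem (h : l ∈ CovChains x y) (hyz : y ⋖ z) : (l ++ [z]) ∈ CovChains x z := by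
  have h2 : [y, z] ∈ CovChains y z :=
    ⟨List.isChain_pair.2 hyz, rfl, rfl⟩
  simpa using (append_mem h h2).1

lemma split (h : l ∈ CovChains x y) {n k : ℕ} (hl : l.length = n + k + 1) :
    ∃ z, (∃ l1 ∈ CovChains x z, l1.length = n + 1) ∧
      (∃ l2 ∈ CovChains z y, l2.length = k + 1) := by
  induction n generalizing l x with
  | zero => exact ⟨x, ⟨[x], singleton_mem x, rfl⟩, ⟨l, h, by omega⟩⟩
  | succ n ih =>
    obtain ⟨a, t, he, hc, hm⟩ := destruct h (by omega)
    obtain ⟨w, ⟨l1, hl1, hl1len⟩, hrest⟩ := ih hm (by subst he; simp at hl ⊢; omega)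
    exact ⟨w, ⟨x :: l1, cons_mem hc hl1, by simp [hl1len]⟩, hrest⟩

end CovChains

section Rank
variable {P : Type*} [PartialOrder P]

/-- Gradedness hypothesis. -/
def Graded (P : Type*) [PartialOrder P] : Prop :=
  ∀ x y : P, ∀ l ∈ CovChains x y, ∀ l' ∈ CovChains x y, l.length = l'.length

variable {b x y : P} {n nx ny : ℕ}

lemma rank_self (b : P) : HasRankFrom b b 0 := ⟨[b], CovChains.singleton_mem b, rfl⟩

lemma rank_unique (hgr : Graded P) (h1 : HasRankFrom b x nx) (h2 : HasRankFrom b x ny) :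
    nx = ny := by
  obtain ⟨l1, hl1, e1⟩ := h1
  obtain ⟨l2, hl2, e2⟩ := h2
  have := hgr b x l1 hl1 l2 hl2
  omega

lemma rank_covBy (h : HasRankFrom b x n) (hc : x ⋖ y) : HasRankFrom b y (n + 1) := by
  obtain ⟨l, hl, e⟩ := h
  exact ⟨l ++ [y], CovChains.snoc_mem hl hc, by simp [e]⟩

lemma chain_length (hgr : Graded P) (hx : HasRankFrom b x nx) (hy : HasRankFrom b y ny)
    {l : List P} (hl : l ∈ CovChains x y) : l.length + nx = ny + 1 := by
  obtain ⟨lx, hlx, ex⟩ := hx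
  obtain ⟨ly, hly, ey⟩ := hy
  obtain ⟨hmem, hlen⟩ := CovChains.append_mem hlx hl
  have := hgr b y _ hmem ly hly
  omega

lemma rank_le_of_le (hgr : Graded P)
    (hne : ∀ x y : P, x ≤ y → (CovChains x y).Nonempty)
    (hx : HasRankFrom b x nx) (hy : HasRankFrom b y ny) (hxy : x ≤ y) : nx ≤ ny := by
  obtain ⟨l, hl⟩ := hne x y hxy
  have := chain_length hgr hx hy hl
  have := CovChains.length_pos hl
  omega

lemma eq_of_le_of_rank_ge (hgr : Graded P)
    (hne : ∀ x y : P, x ≤ y → (CovChains x y).Nonempty)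
    (hx : HasRankFrom b x nx) (hy : HasRankFrom b y ny) (hxy : x ≤ y) (hge : ny ≤ nx) :
    x = y := by
  obtain ⟨l, hl⟩ := hne x y hxy
  have h1 := chain_length hgr hx hy hl
  have h2 := CovChains.length_pos hl
  exact CovChains.eq_of_length_one hl (by omega)

lemma covBy_of_rank_succ (hgr : Graded P)
    (hne : ∀ x y : P, x ≤ y → (CovChains x y).Nonempty)
    (hx : HasRankFrom b x nx) (hy : HasRankFrom b y (nx + 1)) (hxy : x ≤ y) : x ⋖ y := by
  obtain ⟨l, hl⟩ := hne x y hxy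
  have h1 := chain_length hgr hx hy hl
  exact CovChains.covBy_of_length_two hl (by omega)

lemma rank_lt_of_lt (hgr : Graded P)
    (hne : ∀ x y : P, x ≤ y → (CovChains x y).Nonempty)
    (hx : HasRankFrom b x nx) (hy : HasRankFrom b y ny) (hxy : x < y) : nx < ny := by
  have h1 := rank_le_of_le hgr hne hx hy hxy.le
  rcases h1.lt_or_eq with h | h
  · exact h
  · exact absurd (eq_of_le_of_rank_ge hgr hne hx hy hxy.le h.ge) hxy.ne

lemma rank_of_covBy (hgr : Graded P) (hx : HasRankFrom b x nx) (hy : HasRankFrom b y ny)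
    (hc : x ⋖ y) : ny = nx + 1 :=
  (rank_unique hgr hy (rank_covBy hx hc)).symm ▸ rfl

/-- From a rank assertion, split to get an intermediate element of any smaller rank. -/
lemma exists_rank_le (h : HasRankFrom b y n) {k : ℕ} (hk : k ≤ n) :
    ∃ w, HasRankFrom b w k ∧ ∃ l ∈ CovChains w y, l.length = (n - k) + 1 := by
  obtain ⟨l, hl, e⟩ := h
  obtain ⟨w, h1, h2⟩ := CovChains.split hl (n := k) (k := n - k) (by omega)
  exact ⟨w, h1, h2⟩

end Rank
lemma double_count {α β : Type*} (A : Set α) (B : Set β) (R : α → β → Prop)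
    (hA : A.Finite) (hB : B.Finite) (p q : ℕ)
    (hp : ∀ x ∈ A, {y ∈ B | R x y}.ncard = p)
    (hq : ∀ y ∈ B, {x ∈ A | R x y}.ncard = q) :
    A.ncard * p = B.ncard * q := by
  classical
  have hAncard : A.ncard = hA.toFinset.card := Set.ncard_eq_toFinset_card _ hA
  have hBncard : B.ncard = hB.toFinset.card := Set.ncard_eq_toFinset_card _ hB
  have key : ∀ x, {y ∈ B | R x y}.ncard = (hB.toFinset.filter fun y => R x y).card := by
    intro x
    rw [← Set.ncard_coe_finset]
    congr 1
    ext y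
    simp [Set.Finite.mem_toFinset]
  have key2 : ∀ y, {x ∈ A | R x y}.ncard = (hA.toFinset.filter fun x => R x y).card := by
    intro y
    rw [← Set.ncard_coe_finset]
    congr 1
    ext x
    simp [Set.Finite.mem_toFinset]
  calc A.ncard * p = ∑ x ∈ hA.toFinset, (hB.toFinset.filter fun y => R x y).card := by
        rw [Finset.sum_congr rfl fun x hx => ((key x).symm.trans (hp x (by simpa [Set.Finite.mem_toFinset] using hx)))]
        simp [hAncard, mul_comm]
    _ = ∑ x ∈ hA.toFinset, ∑ y ∈ hB.toFinset, if R x y then 1 else 0 := by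
        refine Finset.sum_congr rfl fun x _ => ?_
        rw [Finset.card_filter]
    _ = ∑ y ∈ hB.toFinset, ∑ x ∈ hA.toFinset, if R x y then 1 else 0 := Finset.sum_comm
    _ = ∑ y ∈ hB.toFinset, (hA.toFinset.filter fun x => R x y).card := by
        refine Finset.sum_congr rfl fun y _ => ?_
        rw [Finset.card_filter]
    _ = B.ncard * q := by
        rw [Finset.sum_congr rfl fun y hy => ((key2 y).symm.trans (hq y (by simpa [Set.Finite.mem_toFinset] using hy)))]
        simp [hBncard, mul_comm]

lemma core_contradiction {P : Type*} [PartialOrder P] (b w : P) (m : ℕ) (hm : 3 ≤ m)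
    (hgr : Graded P)
    (hne : ∀ x y : P, x ≤ y → (CovChains x y).Nonempty)
    (hfin : (Set.Icc b w).Finite)
    (hat : ∀ (x y : P) (k : ℕ), 1 ≤ k → k ≤ 3 → (∃ l ∈ CovChains x y, l.length = k + 1) →
      {z : P | x ⋖ z ∧ z ≤ y}.ncard = (if k = 1 then 1 else if k = 2 then m else m + 1))
    (hw : HasRankFrom b w 4) : False := by
  have hble : ∀ {z : P} {k : ℕ}, HasRankFrom b z k → b ≤ z := by
    rintro z k ⟨l, hl, -⟩; exact CovChains.le_of_mem hl
  have hex : ∀ (x y : P) (nx k : ℕ), HasRankFrom b x nx → HasRankFrom b y (nx + k) →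
      x ≤ y → ∃ l ∈ CovChains x y, l.length = k + 1 := by
    intro x y nx k hx hy hxy
    obtain ⟨l, hl⟩ := hne x y hxy
    exact ⟨l, hl, by have := chain_length hgr hx hy hl; omega⟩
  have rat2 : ∀ (x y : P) (nx : ℕ), HasRankFrom b x nx → HasRankFrom b y (nx + 2) →
      x ≤ y → {z : P | x ⋖ z ∧ z ≤ y}.ncard = m := by
    intro x y nx hx hy hxy
    rw [hat x y 2 (by omega) (by omega) (hex x y nx 2 hx hy hxy)]; norm_num
  have rat3 : ∀ (x y : P) (nx : ℕ), HasRankFrom b x nx → HasRankFrom b y (nx + 3) →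
      x ≤ y → {z : P | x ⋖ z ∧ z ≤ y}.ncard = m + 1 := by
    intro x y nx hx hy hxy
    rw [hat x y 3 (by omega) (by omega) (hex x y nx 3 hx hy hxy)]; norm_num
  have hcov : ∀ {u v : P} {nu : ℕ}, HasRankFrom b u nu → HasRankFrom b v (nu + 1) →
      u ≤ v → u ⋖ v := fun hu hv huv => covBy_of_rank_succ hgr hne hu hv huv
  have hrk0 : HasRankFrom b b 0 := rank_self b
  have hfs : ∀ (S : Set P), (∀ z ∈ S, b ≤ z ∧ z ≤ w) → S.Finite := fun S h =>
    hfin.subset fun z hz => Set.mem_Icc.2 (h z hz)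
  -- atoms below an element v
  set At : P → Set P := fun v => {x | b ⋖ x ∧ x ≤ v} with hAtdef
  have hAt_rank1 : ∀ {v x : P}, x ∈ At v → HasRankFrom b x 1 := by
    rintro v x ⟨h1, -⟩
    simpa using rank_covBy hrk0 h1
  have hAt3 : ∀ (v : P), HasRankFrom b v 3 → (At v).ncard = m + 1 := by
    intro v hv
    exact rat3 b v 0 hrk0 (by simpa using hv) (hble hv)
  have hAt2 : ∀ (z : P), HasRankFrom b z 2 → (At z).ncard = m := by
    intro z hz
    exact rat2 b z 0 hrk0 (by simpa using hz) (hble hz)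
  have hAtfin : ∀ (v : P), v ≤ w → (At v).Finite := by
    intro v hvw
    exact hfs _ (fun z hz => ⟨hz.1.le, hz.2.trans hvw⟩)
  -- rank-2 elements below an element v
  set Co : P → Set P := fun v => {z | HasRankFrom b z 2 ∧ z ≤ v} with hCodef
  have hCofin : ∀ (v : P), v ≤ w → (Co v).Finite := by
    intro v hvw
    exact hfs _ (fun z hz => ⟨hble hz.1, hz.2.trans hvw⟩)
  -- fiber count: for x ∈ At v (v rank 3), the rank-2 elements of [b,v] above x number m
  have hfib : ∀ (v : P), HasRankFrom b v 3 → ∀ x ∈ At v, {z ∈ Co v | x ≤ z}.ncard = m := by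
    intro v hv x hx
    have hx1 := hAt_rank1 hx
    have heq : {z ∈ Co v | x ≤ z} = {z | x ⋖ z ∧ z ≤ v} := by
      ext z
      constructor
      · rintro ⟨⟨hz2, hzv⟩, hxz⟩
        exact ⟨hcov hx1 (by simpa using hz2) hxz, hzv⟩
      · rintro ⟨hc, hzv⟩
        exact ⟨⟨by simpa using rank_covBy hx1 hc, hzv⟩, hc.le⟩
    rw [heq]
    exact rat2 x v 1 hx1 (by simpa using hv) hx.2
  -- step (iii): |Co v| = m + 1 for rank-3 v ≤ w
  have hCo3 : ∀ (v : P), HasRankFrom b v 3 → v ≤ w → (Co v).ncard = m + 1 := by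
    intro v hv hvw
    have hdc := double_count (At v) (Co v) (fun x z => x ≤ z) (hAtfin v hvw) (hCofin v hvw)
      m m (hfib v hv) ?_
    · rw [hAt3 v hv] at hdc
      exact Nat.eq_of_mul_eq_mul_right (by omega) hdc.symm
    · intro z hz
      have heq : {x ∈ At v | x ≤ z} = At z := by
        ext x
        constructor
        · rintro ⟨⟨hbx, -⟩, hxz⟩
          exact ⟨hbx, hxz⟩
        · rintro ⟨hbx, hxz⟩
          exact ⟨⟨hbx, hxz.trans hz.2⟩, hxz⟩
      rw [heq]
      exact hAt2 z hz.1
  -- step (v): matching: distinct rank-2 elements of [b,v] jointly dominate all atoms of [b,v]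
  have hmatch : ∀ (v : P), HasRankFrom b v 3 → v ≤ w → ∀ z ∈ Co v, ∀ z' ∈ Co v, z ≠ z' →
      At v ⊆ At z ∪ At z' := by
    intro v hv hvw z hz z' hz' hzz' x hx
    by_contra hx'
    simp only [Set.mem_union] at hx'
    push_neg at hx'
    have hxz : ¬ x ≤ z := fun h => hx'.1 ⟨hx.1, h⟩
    have hxz' : ¬ x ≤ z' := fun h => hx'.2 ⟨hx.1, h⟩
    have hSsub : {z'' ∈ Co v | x ≤ z''} ⊆ Co v := Set.sep_subset _ _
    have hS : (Co v \ {z'' ∈ Co v | x ≤ z''}).ncard = 1 := by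
      rw [Set.ncard_diff hSsub ((hCofin v hvw).subset hSsub), hfib v hv x hx, hCo3 v hv hvw]
      omega
    obtain ⟨a, ha⟩ := Set.ncard_eq_one.1 hS
    have h1 : z ∈ Co v \ {z'' ∈ Co v | x ≤ z''} := ⟨hz, fun h => hxz h.2⟩
    have h2 : z' ∈ Co v \ {z'' ∈ Co v | x ≤ z''} := ⟨hz', fun h => hxz' h.2⟩
    rw [ha] at h1 h2
    exact hzz' (h1.trans h2.symm)
  -- rank-3 elements between a rank-1 element and w
  set Vs : P → Set P := fun x => {u | HasRankFrom b u 3 ∧ x ≤ u ∧ u ≤ w} with hVsdef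
  have hVfin : ∀ (x : P), (Vs x).Finite := fun x =>
    hfs _ (fun u hu => ⟨hble hu.1, hu.2.2⟩)
  set Zs : P → Set P := fun x => {z | x ⋖ z ∧ z ≤ w} with hZsdef
  have hZsfin : ∀ (x : P), b ≤ x → (Zs x).Finite := fun x hbx =>
    hfs _ (fun z hz => ⟨hbx.trans hz.1.le, hz.2⟩)
  have hZx3 : ∀ (x : P), HasRankFrom b x 1 → x ≤ w → (Zs x).ncard = m + 1 := by
    intro x hx hxw
    exact rat3 x w 1 hx (by simpa using hw) hxw
  -- fiber: for z ∈ Zs x, the rank-3 elements of [x,w] above z number m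
  have hfib2 : ∀ (x : P), HasRankFrom b x 1 → ∀ z ∈ Zs x, {u ∈ Vs x | z ≤ u}.ncard = m := by
    intro x hx z hz
    have hz2 : HasRankFrom b z 2 := by simpa using rank_covBy hx hz.1
    have heq : {u ∈ Vs x | z ≤ u} = {u | z ⋖ u ∧ u ≤ w} := by
      ext u
      constructor
      · rintro ⟨⟨hu3, -, huw⟩, hzu⟩
        exact ⟨hcov hz2 (by simpa using hu3) hzu, huw⟩
      · rintro ⟨hc, huw⟩
        exact ⟨⟨by simpa using rank_covBy hz2 hc, hz.1.le.trans hc.le, huw⟩, hc.le⟩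
    rw [heq]
    exact rat2 z w 2 hz2 (by simpa using hw) hz.2
  -- fiber: for u ∈ Vs x, the rank-2 elements of [x,u] number m
  have hfib3 : ∀ (x : P), HasRankFrom b x 1 → ∀ u ∈ Vs x, {z ∈ Zs x | z ≤ u}.ncard = m := by
    intro x hx u hu
    have heq : {z ∈ Zs x | z ≤ u} = {z | x ⋖ z ∧ z ≤ u} := by
      ext z
      constructor
      · rintro ⟨⟨hc, -⟩, hzu⟩
        exact ⟨hc, hzu⟩
      · rintro ⟨hc, hzu⟩
        exact ⟨⟨hc, hzu.trans hu.2.2⟩, hzu⟩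
    rw [heq]
    exact rat2 x u 1 hx (by simpa using hu.1) hu.2.1
  -- step (iv): |Vs x| = m + 1 for rank-1 x ≤ w
  have hVs3 : ∀ (x : P), HasRankFrom b x 1 → x ≤ w → (Vs x).ncard = m + 1 := by
    intro x hx hxw
    have hdc := double_count (Zs x) (Vs x) (fun z u => z ≤ u) (hZsfin x (hble hx)) (hVfin x)
      m m (hfib2 x hx) (hfib3 x hx)
    rw [hZx3 x hx hxw] at hdc
    exact Nat.eq_of_mul_eq_mul_right (by omega) hdc.symm
  -- get a rank-1 element x₀ below w
  obtain ⟨x₀, hx₀, l₀, hl₀, -⟩ := exists_rank_le hw (k := 1) (by omega)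
  have hx₀w : x₀ ≤ w := CovChains.le_of_mem hl₀
  -- step (vii): all elements of Vs x₀ have the same atom set
  have hsame : ∀ u ∈ Vs x₀, ∀ u' ∈ Vs x₀, At u = At u' := by
    intro u hu u' hu'
    rcases eq_or_ne u u' with rfl | huu'
    · rfl
    -- find two distinct common rank-2 lower covers
    have h1 : {z ∈ Zs x₀ | z ≤ u}.ncard = m := hfib3 x₀ hx₀ u hu
    have h2 : {z ∈ Zs x₀ | z ≤ u'}.ncard = m := hfib3 x₀ hx₀ u' hu'
    have hZfin := hZsfin x₀ (hble hx₀)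
    have hf1 : ({z ∈ Zs x₀ | z ≤ u}).Finite := hZfin.subset (Set.sep_subset _ _)
    have hf2 : ({z ∈ Zs x₀ | z ≤ u'}).Finite := hZfin.subset (Set.sep_subset _ _)
    have hunion : ({z ∈ Zs x₀ | z ≤ u} ∪ {z ∈ Zs x₀ | z ≤ u'}).ncard ≤ m + 1 := by
      rw [← hZx3 x₀ hx₀ hx₀w]
      exact Set.ncard_le_ncard (by
        rintro z (⟨hz, -⟩ | ⟨hz, -⟩) <;> exact hz) hZfin
    have hintfin : ({z ∈ Zs x₀ | z ≤ u} ∩ {z ∈ Zs x₀ | z ≤ u'}).Finite :=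
      hf1.inter_of_left _
    have hinter : 2 ≤ ({z ∈ Zs x₀ | z ≤ u} ∩ {z ∈ Zs x₀ | z ≤ u'}).ncard := by
      have := Set.ncard_union_add_ncard_inter {z ∈ Zs x₀ | z ≤ u} {z ∈ Zs x₀ | z ≤ u'} hf1 hf2
      omega
    obtain ⟨z, hzmem, z', hz'mem, hzz'⟩ := (Set.one_lt_ncard hintfin).1 (by omega)
    -- z, z' are distinct rank-2 elements below both u and u'
    have hzrk : HasRankFrom b z 2 := by simpa using rank_covBy hx₀ hzmem.1.1.1
    have hz'rk : HasRankFrom b z' 2 := by simpa using rank_covBy hx₀ hz'mem.1.1.1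
    have hCu : z ∈ Co u := ⟨hzrk, hzmem.1.2⟩
    have hC'u : z' ∈ Co u := ⟨hz'rk, hz'mem.1.2⟩
    have hCu' : z ∈ Co u' := ⟨hzrk, hzmem.2.2⟩
    have hC'u' : z' ∈ Co u' := ⟨hz'rk, hz'mem.2.2⟩
    have e1 : At u ⊆ At z ∪ At z' := hmatch u hu.1 hu.2.2 z hCu z' hC'u hzz'
    have e1' : At z ∪ At z' ⊆ At u := by
      rintro x (⟨hbx, hxz⟩ | ⟨hbx, hxz⟩)
      · exact ⟨hbx, hxz.trans hCu.2⟩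
      · exact ⟨hbx, hxz.trans hC'u.2⟩
    have e2 : At u' ⊆ At z ∪ At z' := hmatch u' hu'.1 hu'.2.2 z hCu' z' hC'u' hzz'
    have e2' : At z ∪ At z' ⊆ At u' := by
      rintro x (⟨hbx, hxz⟩ | ⟨hbx, hxz⟩)
      · exact ⟨hbx, hxz.trans hCu'.2⟩
      · exact ⟨hbx, hxz.trans hC'u'.2⟩
    rw [Set.Subset.antisymm e1 e1', Set.Subset.antisymm e2 e2']
  -- pick u₀ ∈ Vs x₀ and let A be the common atom set
  have hVne : (Vs x₀).Nonempty := by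
    have : (Vs x₀).ncard = m + 1 := hVs3 x₀ hx₀ hx₀w
    exact Set.nonempty_of_ncard_ne_zero (by omega)
  obtain ⟨u₀, hu₀⟩ := hVne
  -- every atom in At u₀ sees the same rank-3 set
  have hVeq : ∀ x ∈ At u₀, Vs x = Vs x₀ := by
    intro x hx
    have hx1 : HasRankFrom b x 1 := hAt_rank1 hx
    have hxw : x ≤ w := hx.2.trans hu₀.2.2
    have hsub : Vs x₀ ⊆ Vs x := by
      intro u hu
      have hxu : x ∈ At u := (hsame u₀ hu₀ u hu) ▸ hx
      exact ⟨hu.1, hxu.2, hu.2.2⟩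
    exact (Set.eq_of_subset_of_ncard_le hsub
      (by rw [hVs3 x hx1 hxw, hVs3 x₀ hx₀ hx₀w]) (hVfin x)).symm
  -- the global rank-2 set below Vs x₀
  set Z : Set P := {z | HasRankFrom b z 2 ∧ ∃ u ∈ Vs x₀, z ≤ u} with hZdef
  have hZfin : Z.Finite := hfs _ (by
    rintro z ⟨hz2, u, hu, hzu⟩
    exact ⟨hble hz2, hzu.trans hu.2.2⟩)
  have hcount := double_count Z (Vs x₀) (fun z u => z ≤ u) hZfin (hVfin x₀) m (m + 1) ?_ ?_
  · rw [hVs3 x₀ hx₀ hx₀w] at hcount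
    -- m ∣ (m+1)*(m+1) : contradiction
    have e : (m + 1) * (m + 1) = m * (m + 2) + 1 := by ring
    have hd1 : m ∣ Z.ncard * m := dvd_mul_left m Z.ncard
    rw [hcount, e] at hd1
    have hd2 : m ∣ m * (m + 2) := dvd_mul_right m (m + 2)
    have hd3 : m ∣ 1 := by
      have := Nat.dvd_sub hd1 hd2
      simpa using this
    have := Nat.le_of_dvd one_pos hd3
    omega
  · -- fiber over z ∈ Z : the rank-3 covers of z, all of which lie in Vs x₀
    intro z hz
    obtain ⟨hz2, u₂, hu₂, hzu₂⟩ := hz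
    have hAtzne : (At z).Nonempty := by
      have := hAt2 z hz2
      exact Set.nonempty_of_ncard_ne_zero (by omega)
    obtain ⟨x₁, hx₁⟩ := hAtzne
    have hx₁u₀ : x₁ ∈ At u₀ := by
      have hx₁u₂ : x₁ ∈ At u₂ := ⟨hx₁.1, hx₁.2.trans hzu₂⟩
      exact (hsame u₂ hu₂ u₀ hu₀) ▸ hx₁u₂
    have heq : {u ∈ Vs x₀ | z ≤ u} = {u | z ⋖ u ∧ u ≤ w} := by
      ext u
      constructor
      · rintro ⟨⟨hu3, -, huw⟩, hzu⟩
        exact ⟨hcov hz2 (by simpa using hu3) hzu, huw⟩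
      · rintro ⟨hc, huw⟩
        have hu3 : HasRankFrom b u 3 := by simpa using rank_covBy hz2 hc
        have humem : u ∈ Vs x₁ := ⟨hu3, hx₁.2.trans hc.le, huw⟩
        rw [hVeq x₁ hx₁u₀] at humem
        exact ⟨humem, hc.le⟩
    rw [heq]
    exact rat2 z w 2 hz2 (by simpa using hw) (hzu₂.trans hu₂.2.2)
  · -- fiber over u ∈ Vs x₀ : Co u
    intro u hu
    have heq : {z ∈ Z | z ≤ u} = Co u := by
      ext z
      constructor
      · rintro ⟨⟨hz2, -⟩, hzu⟩
        exact ⟨hz2, hzu⟩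
      · rintro ⟨hz2, hzu⟩
        exact ⟨⟨hz2, u, hu, hzu⟩, hzu⟩
    rw [heq]
    exact hCo3 u hu.1 hu.2.2

section GenericRank
variable {P : Type*} [PartialOrder P]

lemma chain_length_of_rank (ρ : P → ℕ) (hρ : ∀ a b : P, a ⋖ b → ρ b = ρ a + 1) :
    ∀ {l : List P} {x y : P}, l ∈ CovChains x y → l.length + ρ x = ρ y + 1 := by
  have main : ∀ (n : ℕ) (l : List P) (x y : P), l ∈ CovChains x y → l.length = n →
      l.length + ρ x = ρ y + 1 := by
    intro n
    induction n using Nat.strong_induction_on with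
    | _ n ih =>
      intro l x y h hl
      rcases Nat.lt_or_ge n 2 with h2 | h2
      · have h1 : n = 1 := by have := CovChains.length_pos h; omega
        have := CovChains.eq_of_length_one h (hl.trans h1)
        subst this
        omega
      · obtain ⟨a, t, he, hc, hm⟩ := CovChains.destruct h (hl ▸ h2)
        have := ih (a :: t).length (by subst he; subst hl; simp) (a :: t) a y hm rfl
        have := hρ x a hc
        subst he
        simp only [List.length_cons] at *
        omega
  exact fun {l x y} h => main l.length l x y h rfl

lemma eq_of_le_rank (ρ : P → ℕ) (hmono : ∀ a b : P, a < b → ρ a < ρ b)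
    {a b : P} (h : a ≤ b) (hr : ρ b ≤ ρ a) : a = b := by
  rcases h.lt_or_eq with h | h
  · exact absurd (hmono _ _ h) (by omega)
  · exact h

lemma covBy_of_lt_rank_succ (ρ : P → ℕ) (hmono : ∀ a b : P, a < b → ρ a < ρ b)
    {a b : P} (h : a < b) (hr : ρ b ≤ ρ a + 1) : a ⋖ b := by
  refine ⟨h, fun c hac hcb => ?_⟩
  have := hmono _ _ hac
  have := hmono _ _ hcb
  omega

lemma covChains_nonempty_of_rank (ρ : P → ℕ)
    (hmono : ∀ a b : P, a < b → ρ a < ρ b)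
    (hstep : ∀ a b : P, a < b → ∃ c, a ⋖ c ∧ c ≤ b) :
    ∀ {x y : P}, x ≤ y → (CovChains x y).Nonempty := by
  have main : ∀ (n : ℕ) (x y : P), x ≤ y → ρ y - ρ x = n → (CovChains x y).Nonempty := by
    intro n
    induction n using Nat.strong_induction_on with
    | _ n ih =>
      intro x y hxy hn
      rcases hxy.lt_or_eq with hlt | rfl
      · obtain ⟨c, hc, hcy⟩ := hstep x y hlt
        rcases hcy.lt_or_eq with hcylt | rfl
        · have h1 := hmono _ _ hc.1
          have h2 := hmono _ _ hcylt
          obtain ⟨l, hl⟩ := ih (ρ y - ρ c) (by omega) c y hcy rfl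
          exact ⟨x :: l, CovChains.cons_mem hc hl⟩
        · exact ⟨[x, c], ⟨List.isChain_pair.2 hc, rfl, rfl⟩⟩
      · exact ⟨[x], CovChains.singleton_mem x⟩
  exact fun {x y} h => main (ρ y - ρ x) x y h rfl

end GenericRank

section T3sec
variable {m : ℕ}

def midT {m : ℕ} (p : Mid3 m) : T3 m := ((p : WithTop (Mid3 m)) : T3 m)
def topT (m : ℕ) : T3 m := ((⊤ : WithTop (Mid3 m)) : T3 m)

def rk3 {m : ℕ} : T3 m → ℕ :=
  WithBot.recBotCoe 0 (WithTop.recTopCoe 3 (fun p => if p.isY then 2 else 1))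

@[simp] lemma rk3_bot : rk3 (⊥ : T3 m) = 0 := rfl
@[simp] lemma rk3_top : rk3 (topT m) = 3 := rfl
@[simp] lemma rk3_mid (p : Mid3 m) : rk3 (midT p) = if p.isY then 2 else 1 := rfl

lemma t3_cases (a : T3 m) : a = ⊥ ∨ a = topT m ∨ ∃ p : Mid3 m, a = midT p := by
  induction a using WithBot.recBotCoe with
  | bot => exact Or.inl rfl
  | coe u =>
    induction u using WithTop.recTopCoe with
    | top => exact Or.inr (Or.inl rfl)
    | coe p => exact Or.inr (Or.inr ⟨p, rfl⟩)

lemma mid3_le_iff {p q : Mid3 m} :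
    p ≤ q ↔ (p = q ∨ (p.isY = false ∧ q.isY = true ∧ p.idx ≠ q.idx)) := Iff.rfl

lemma mid3_lt_iff {p q : Mid3 m} :
    p < q ↔ (p.isY = false ∧ q.isY = true ∧ p.idx ≠ q.idx) := by
  rw [lt_iff_le_and_ne, mid3_le_iff]
  constructor
  · rintro ⟨rfl | h, hne⟩
    · exact absurd rfl hne
    · exact h
  · rintro ⟨h1, h2, h3⟩
    refine ⟨Or.inr ⟨h1, h2, h3⟩, fun h => ?_⟩
    subst h; rw [h1] at h2; exact Bool.noConfusion h2

@[simp] lemma midT_le_midT {p q : Mid3 m} : midT p ≤ midT q ↔ p ≤ q := by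
  unfold midT; rw [WithBot.coe_le_coe, WithTop.coe_le_coe]

@[simp] lemma midT_lt_midT {p q : Mid3 m} : midT p < midT q ↔ p < q := by
  unfold midT; rw [WithBot.coe_lt_coe, WithTop.coe_lt_coe]

@[simp] lemma midT_lt_topT (p : Mid3 m) : midT p < topT m := by
  unfold midT topT; rw [WithBot.coe_lt_coe]; exact WithTop.coe_lt_top p

@[simp] lemma midT_le_topT (p : Mid3 m) : midT p ≤ topT m := (midT_lt_topT p).le

@[simp] lemma bot_lt_midT (p : Mid3 m) : (⊥ : T3 m) < midT p := WithBot.bot_lt_coe _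

@[simp] lemma bot_lt_topT : (⊥ : T3 m) < topT m := WithBot.bot_lt_coe _

lemma le_topT (a : T3 m) : a ≤ topT m := by
  rcases t3_cases a with rfl | rfl | ⟨p, rfl⟩
  · exact bot_le
  · exact le_refl _
  · exact midT_le_topT p

lemma not_topT_lt (a : T3 m) : ¬ topT m < a := fun h => absurd ((le_topT a).trans_lt h) (lt_irrefl _)

lemma not_midT_lt_midT_of_isY {p q : Mid3 m} (h : p.isY = true) : ¬ midT p < midT q := by
  rw [midT_lt_midT, mid3_lt_iff]
  rintro ⟨h1, -, -⟩
  rw [h] at h1; exact Bool.noConfusion h1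

lemma midT_injective : Function.Injective (midT (m := m)) := by
  intro p q h
  unfold midT at h
  exact WithTop.coe_injective (WithBot.coe_injective h)

lemma rk3_strictMono : ∀ a b : T3 m, a < b → rk3 a < rk3 b := by
  intro a b hab
  rcases t3_cases a with rfl | rfl | ⟨p, rfl⟩ <;>
    rcases t3_cases b with rfl | rfl | ⟨q, rfl⟩
  · exact absurd hab (lt_irrefl _)
  · simp
  · rcases Bool.eq_false_or_eq_true q.isY with h | h <;> simp [h]
  · exact absurd hab (by simp [not_lt_bot])
  · exact absurd hab (lt_irrefl _)
  · exact absurd hab (not_topT_lt _)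
  · exact absurd hab (by simp [not_lt_bot])
  · rcases Bool.eq_false_or_eq_true p.isY with h | h <;> simp [h]
  · rw [midT_lt_midT, mid3_lt_iff] at hab
    simp [hab.1, hab.2.1]

lemma fin_exists_ne (hm : 1 ≤ m) (j : Fin (m + 1)) : ∃ i : Fin (m + 1), i ≠ j := by
  by_cases h : j.val = 0
  · exact ⟨⟨1, by omega⟩, by simp [Fin.ext_iff, h]⟩
  · exact ⟨⟨0, by omega⟩, by simp [Fin.ext_iff]; omega⟩

lemma t3_step (hm : 1 ≤ m) : ∀ a b : T3 m, a < b →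
    ∃ c, a < c ∧ c ≤ b ∧ rk3 c = rk3 a + 1 := by
  intro a b hab
  rcases t3_cases a with rfl | rfl | ⟨p, rfl⟩ <;>
    rcases t3_cases b with rfl | rfl | ⟨q, rfl⟩
  · exact absurd hab (lt_irrefl _)
  · -- ⊥ < ⊤ : take x_0
    exact ⟨midT ⟨false, ⟨0, by omega⟩⟩, by simp, le_topT _, by simp⟩
  · -- ⊥ < mid q
    rcases Bool.eq_false_or_eq_true q.isY with h | h
    · obtain ⟨i, hi⟩ := fin_exists_ne hm q.idx
      refine ⟨midT ⟨false, i⟩, by simp, ?_, by simp⟩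
      rw [midT_le_midT, mid3_le_iff]
      exact Or.inr ⟨rfl, h, hi⟩
    · exact ⟨midT q, hab, le_refl _, by simp [h]⟩
  · exact absurd hab (by simp [not_lt_bot])
  · exact absurd hab (lt_irrefl _)
  · exact absurd hab (not_topT_lt _)
  · exact absurd hab (by simp [not_lt_bot])
  · -- mid p < ⊤
    rcases Bool.eq_false_or_eq_true p.isY with h | h
    · exact ⟨topT m, hab, le_refl _, by simp [h]⟩
    · obtain ⟨j, hj⟩ := fin_exists_ne hm p.idx
      refine ⟨midT ⟨true, j⟩, ?_, midT_le_topT _, by simp [h]⟩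
      rw [midT_lt_midT, mid3_lt_iff]
      exact ⟨h, rfl, by simpa using hj.symm⟩
  · -- mid p < mid q : rank gap exactly 1
    rw [midT_lt_midT, mid3_lt_iff] at hab
    exact ⟨midT q, by rw [midT_lt_midT, mid3_lt_iff]; exact hab, le_refl _,
      by simp [hab.1, hab.2.1]⟩

lemma rk3_covBy (hm : 1 ≤ m) {a b : T3 m} (h : a ⋖ b) : rk3 b = rk3 a + 1 := by
  obtain ⟨c, h1, h2, h3⟩ := t3_step hm a b h.1
  rcases h2.lt_or_eq with hlt | rfl
  · exact absurd hlt (h.2 h1)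
  · exact h3

lemma t3_covBy_of_rank {a b : T3 m} (h : a < b) (hr : rk3 b = rk3 a + 1) : a ⋖ b :=
  covBy_of_lt_rank_succ rk3 rk3_strictMono h (by omega)

lemma t3_graded (hm : 1 ≤ m) : Graded (T3 m) := by
  intro x y l hl l' hl'
  have h1 := chain_length_of_rank rk3 (fun a b h => rk3_covBy hm h) hl
  have h2 := chain_length_of_rank rk3 (fun a b h => rk3_covBy hm h) hl'
  omega

lemma t3_chains_nonempty (hm : 1 ≤ m) : ∀ {x y : T3 m}, x ≤ y → (CovChains x y).Nonempty :=
  covChains_nonempty_of_rank rk3 rk3_strictMono (fun a b hab => by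
    obtain ⟨c, h1, h2, h3⟩ := t3_step hm a b hab
    exact ⟨c, t3_covBy_of_rank h1 h3, h2⟩)

lemma t3_shape_rank1 {a : T3 m} (h : rk3 a = 1) : ∃ i, a = midT ⟨false, i⟩ := by
  rcases t3_cases a with rfl | rfl | ⟨p, rfl⟩
  · simp at h
  · simp at h
  · rcases Bool.eq_false_or_eq_true p.isY with hb | hb
    · simp [hb] at h
    · obtain ⟨a, i⟩ := p
      simp only at hb
      subst hb
      exact ⟨i, rfl⟩

lemma t3_shape_rank2 {a : T3 m} (h : rk3 a = 2) : ∃ j, a = midT ⟨true, j⟩ := by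
  rcases t3_cases a with rfl | rfl | ⟨p, rfl⟩
  · simp at h
  · simp at h
  · rcases Bool.eq_false_or_eq_true p.isY with hb | hb
    · obtain ⟨a, i⟩ := p
      simp only at hb
      subst hb
      exact ⟨i, rfl⟩
    · simp [hb] at h

lemma t3_shape_rank3 {a : T3 m} (h : rk3 a = 3) : a = topT m := by
  rcases t3_cases a with rfl | rfl | ⟨p, rfl⟩
  · simp at h
  · rfl
  · rcases Bool.eq_false_or_eq_true p.isY with hb | hb <;> simp [hb] at h

lemma t3_shape_rank0 {a : T3 m} (h : rk3 a = 0) : a = ⊥ := by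
  rcases t3_cases a with rfl | rfl | ⟨p, rfl⟩
  · rfl
  · simp at h
  · rcases Bool.eq_false_or_eq_true p.isY with hb | hb <;> simp [hb] at h

instance : Fintype (Mid3 m) :=
  Fintype.ofEquiv (Bool × Fin (m + 1))
    ⟨fun q => ⟨q.1, q.2⟩, fun p => (p.isY, p.idx), fun _ => rfl, fun _ => rfl⟩

instance : Fintype (WithTop (Mid3 m)) :=
  Fintype.ofEquiv (Option (Mid3 m))
    (Equiv.refl (Option (Mid3 m)) : Option (Mid3 m) ≃ WithTop (Mid3 m))

instance : Fintype (T3 m) :=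
  Fintype.ofEquiv (Option (WithTop (Mid3 m)))
    (Equiv.refl _ : Option (WithTop (Mid3 m)) ≃ WithBot (WithTop (Mid3 m)))

end T3sec
section T3bin
variable {m : ℕ}

lemma rk3_le_3 (a : T3 m) : rk3 a ≤ 3 := by
  rcases t3_cases a with rfl | rfl | ⟨p, rfl⟩
  · simp
  · simp
  · rcases Bool.eq_false_or_eq_true p.isY with h | h <;> simp [h]

lemma fin_ncard_ne (j : Fin (m + 1)) : {i : Fin (m + 1) | i ≠ j}.ncard = m := by
  have he : {i : Fin (m + 1) | i ≠ j} = ({j} : Set (Fin (m + 1)))ᶜ := by ext i; simp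
  rw [he, Set.ncard_eq_toFinset_card', Set.toFinset_compl, Set.toFinset_singleton,
    Finset.card_compl, Finset.card_singleton, Fintype.card_fin]
  omega

lemma fin_ncard_univ : (Set.univ : Set (Fin (m + 1))).ncard = m + 1 := by
  rw [Set.ncard_univ, Nat.card_eq_fintype_card, Fintype.card_fin]

lemma midF_inj : Function.Injective (fun i : Fin (m + 1) => midT (⟨false, i⟩ : Mid3 m)) := by
  intro i j h
  have := midT_injective h
  injection this

lemma midTr_inj : Function.Injective (fun j : Fin (m + 1) => midT (⟨true, j⟩ : Mid3 m)) := by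
  intro i j h
  have := midT_injective h
  injection this

lemma t3_binomial (hm : 1 ≤ m) : IsBinomialIntervalOn (T3 m) (⊥ : T3 m) (topT m) (A3seq m) 3 := by
  have hcovrk : ∀ a b : T3 m, a ⋖ b → rk3 b = rk3 a + 1 := fun a b h => rk3_covBy hm h
  refine ⟨inferInstance, fun x => ⟨bot_le, le_topT x⟩, ?_, fun x y h => t3_chains_nonempty hm h,
    t3_graded hm, ?_⟩
  · intro l hl
    have := chain_length_of_rank rk3 hcovrk hl
    simp only [rk3_bot, rk3_top] at this
    omega
  · intro x y k hk ⟨l, hl, hlen⟩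
    have hxy := CovChains.le_of_mem hl
    have hcl := chain_length_of_rank rk3 hcovrk hl
    have hy3 := rk3_le_3 y
    have hrk : rk3 y = rk3 x + k := by omega
    have hk3 : k ≤ 3 := by omega
    interval_cases k
    · -- k = 1 : the set is {y}
      have hxny : x ≠ y := fun h => by rw [h] at hrk; omega
      have hset : {z : T3 m | x ⋖ z ∧ z ≤ y} = {y} := by
        ext z
        constructor
        · rintro ⟨hc, hzy⟩
          have h1 := hcovrk _ _ hc
          exact eq_of_le_rank rk3 rk3_strictMono hzy (by omega)
        · rintro rfl
          exact ⟨t3_covBy_of_rank (hxy.lt_of_ne hxny) (by omega), le_refl _⟩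
      rw [hset, Set.ncard_singleton]
      simp [A3seq]
    · -- k = 2
      rcases Nat.lt_or_ge (rk3 x) 1 with hx0 | hx1
      · -- x = ⊥, y = midT ⟨true, j⟩
        have hx : rk3 x = 0 := by omega
        obtain rfl := t3_shape_rank0 hx
        obtain ⟨j, rfl⟩ := t3_shape_rank2 (show rk3 y = 2 by omega)
        have hset : {z : T3 m | ⊥ ⋖ z ∧ z ≤ midT ⟨true, j⟩} =
            (fun i : Fin (m + 1) => midT (⟨false, i⟩ : Mid3 m)) '' {i | i ≠ j} := by
          ext z
          constructor
          · rintro ⟨hc, hzy⟩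
            have h1 := hcovrk _ _ hc
            simp only [rk3_bot] at h1
            obtain ⟨i, rfl⟩ := t3_shape_rank1 h1
            rw [midT_le_midT, mid3_le_iff] at hzy
            rcases hzy with heq | ⟨-, -, hne⟩
            · exact absurd (congrArg Mid3.isY heq) (by simp)
            · exact ⟨i, hne, rfl⟩
          · rintro ⟨i, hi, rfl⟩
            refine ⟨t3_covBy_of_rank (bot_lt_midT _) (by simp), ?_⟩
            rw [midT_le_midT, mid3_le_iff]
            exact Or.inr ⟨rfl, rfl, hi⟩
        rw [hset, Set.ncard_image_of_injective _ midF_inj, fin_ncard_ne]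
        simp [A3seq]
      · -- x = midT ⟨false, i⟩, y = topT
        have hx : rk3 x = 1 := by omega
        obtain ⟨i, rfl⟩ := t3_shape_rank1 hx
        obtain rfl := t3_shape_rank3 (show rk3 y = 3 by omega)
        have hset : {z : T3 m | midT (⟨false, i⟩ : Mid3 m) ⋖ z ∧ z ≤ topT m} =
            (fun j : Fin (m + 1) => midT (⟨true, j⟩ : Mid3 m)) '' {j | j ≠ i} := by
          ext z
          constructor
          · rintro ⟨hc, -⟩
            have h1 := hcovrk _ _ hc
            simp only [rk3_mid] at h1
            have h2 : rk3 z = 2 := by simpa using h1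
            obtain ⟨j, rfl⟩ := t3_shape_rank2 h2
            have hlt := hc.1
            rw [midT_lt_midT, mid3_lt_iff] at hlt
            exact ⟨j, fun h => hlt.2.2 (by simp [h]), rfl⟩
          · rintro ⟨j, hj, rfl⟩
            refine ⟨t3_covBy_of_rank ?_ (by simp), le_topT _⟩
            rw [midT_lt_midT, mid3_lt_iff]
            exact ⟨rfl, rfl, fun h => hj (by simpa using h.symm)⟩
        rw [hset, Set.ncard_image_of_injective _ midTr_inj, fin_ncard_ne]
        simp [A3seq]
    · -- k = 3 : x = ⊥, y = topT
      obtain rfl := t3_shape_rank0 (show rk3 x = 0 by omega)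
      obtain rfl := t3_shape_rank3 (show rk3 y = 3 by omega)
      have hset : {z : T3 m | (⊥ : T3 m) ⋖ z ∧ z ≤ topT m} =
          (fun i : Fin (m + 1) => midT (⟨false, i⟩ : Mid3 m)) '' Set.univ := by
        ext z
        constructor
        · rintro ⟨hc, -⟩
          have h1 := hcovrk _ _ hc
          simp only [rk3_bot] at h1
          obtain ⟨i, rfl⟩ := t3_shape_rank1 h1
          exact ⟨i, trivial, rfl⟩
        · rintro ⟨i, -, rfl⟩
          exact ⟨t3_covBy_of_rank (bot_lt_midT _) (by simp), le_topT _⟩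
      rw [hset, Set.ncard_image_of_injective _ midF_inj, fin_ncard_univ]
      simp [A3seq]

end T3bin
section Unique
variable {m : ℕ}

def t3map {Q : Type*} (b t : Q) (E ν : Fin (m + 1) → Q) : T3 m → Q :=
  WithBot.recBotCoe b (WithTop.recTopCoe t (fun p => if p.isY then ν p.idx else E p.idx))

@[simp] lemma t3map_bot {Q : Type*} (b t : Q) (E ν : Fin (m + 1) → Q) :
    t3map b t E ν (⊥ : T3 m) = b := rfl
@[simp] lemma t3map_top {Q : Type*} (b t : Q) (E ν : Fin (m + 1) → Q) :
    t3map b t E ν (topT m) = t := rfl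
@[simp] lemma t3map_midF {Q : Type*} (b t : Q) (E ν : Fin (m + 1) → Q) (i : Fin (m + 1)) :
    t3map b t E ν (midT ⟨false, i⟩) = E i := rfl
@[simp] lemma t3map_midT' {Q : Type*} (b t : Q) (E ν : Fin (m + 1) → Q) (j : Fin (m + 1)) :
    t3map b t E ν (midT ⟨true, j⟩) = ν j := rfl

lemma t3_unique (hm : 2 ≤ m) (Q : Type*) [PartialOrder Q] (b t : Q)
    (H : IsBinomialIntervalOn Q b t (A3seq m) 3) : Nonempty (Q ≃o T3 m) := by
  classical
  obtain ⟨hfin, hbd, hlen4, hne, hgr, hat⟩ := H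
  have hgr' : Graded Q := hgr
  have hrkt : HasRankFrom b t 3 := by
    obtain ⟨l, hl⟩ := hne b t (hbd t).1
    exact ⟨l, hl, by rw [hlen4 l hl]⟩
  have hrk0 : HasRankFrom b b 0 := rank_self b
  have hble : ∀ {z : Q} {k : ℕ}, HasRankFrom b z k → b ≤ z := by
    rintro z k ⟨l, hl, -⟩; exact CovChains.le_of_mem hl
  have hex : ∀ (x y : Q) (nx k : ℕ), HasRankFrom b x nx → HasRankFrom b y (nx + k) →
      x ≤ y → ∃ l ∈ CovChains x y, l.length = k + 1 := by
    intro x y nx k hx hy hxy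
    obtain ⟨l, hl⟩ := hne x y hxy
    exact ⟨l, hl, by have := chain_length hgr' hx hy hl; omega⟩
  have rat2 : ∀ (x y : Q) (nx : ℕ), HasRankFrom b x nx → HasRankFrom b y (nx + 2) →
      x ≤ y → {z : Q | x ⋖ z ∧ z ≤ y}.ncard = m := by
    intro x y nx hx hy hxy
    rw [hat x y 2 (by omega) (hex x y nx 2 hx hy hxy)]
    simp [A3seq]
  have rat3' : {z : Q | b ⋖ z ∧ z ≤ t}.ncard = m + 1 := by
    rw [hat b t 3 (by omega) (hex b t 0 3 hrk0 (by simpa using hrkt) (hbd t).1)]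
    simp [A3seq]
  have hcov : ∀ {u v : Q} {nu : ℕ}, HasRankFrom b u nu → HasRankFrom b v (nu + 1) →
      u ≤ v → u ⋖ v := fun hu hv huv => covBy_of_rank_succ hgr' hne hu hv huv
  have hdiff : ∀ {p q : Q} {np nq : ℕ}, HasRankFrom b p np → HasRankFrom b q nq →
      np ≠ nq → p ≠ q := by
    rintro p q np nq hp hq hnpq rfl
    exact hnpq (rank_unique hgr' hp hq)
  have hnle : ∀ {p q : Q} {np nq : ℕ}, HasRankFrom b p np → HasRankFrom b q nq →
      nq < np → ¬ p ≤ q := fun hp hq h hle =>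
    absurd (rank_le_of_le hgr' hne hp hq hle) (by omega)
  have heqrk : ∀ {p q : Q} {np : ℕ}, HasRankFrom b p np → HasRankFrom b q np →
      p ≤ q → p = q := fun hp hq hle => eq_of_le_of_rank_ge hgr' hne hp hq hle le_rfl
  haveI := hfin
  set L1 : Set Q := {x | HasRankFrom b x 1} with hL1def
  set L2 : Set Q := {z | HasRankFrom b z 2} with hL2def
  have hL1eq : L1 = {z : Q | b ⋖ z ∧ z ≤ t} := by
    ext x
    constructor
    · intro hx
      exact ⟨hcov hrk0 (by simpa [hL1def] using hx) (hble hx), (hbd x).2⟩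
    · rintro ⟨hc, -⟩
      simpa [hL1def] using rank_covBy hrk0 hc
  have hL1card : L1.ncard = m + 1 := by rw [hL1eq]; exact rat3'
  have hL1fin : L1.Finite := Set.toFinite _
  have hL2fin : L2.Finite := Set.toFinite _
  have hup : ∀ x ∈ L1, {z ∈ L2 | x ≤ z}.ncard = m := by
    intro x hx
    have heq : {z ∈ L2 | x ≤ z} = {z : Q | x ⋖ z ∧ z ≤ t} := by
      ext z
      constructor
      · rintro ⟨hz2, hxz⟩
        exact ⟨hcov hx (by simpa [hL2def] using hz2) hxz, (hbd z).2⟩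
      · rintro ⟨hc, -⟩
        exact ⟨by simpa [hL2def] using rank_covBy hx hc, hc.le⟩
    rw [heq]
    exact rat2 x t 1 hx (by simpa using hrkt) (hbd x).2
  have hdn : ∀ z ∈ L2, {x ∈ L1 | x ≤ z}.ncard = m := by
    intro z hz
    have heq : {x ∈ L1 | x ≤ z} = {x : Q | b ⋖ x ∧ x ≤ z} := by
      ext x
      constructor
      · rintro ⟨hx1, hxz⟩
        exact ⟨hcov hrk0 (by simpa [hL1def] using hx1) (hble hx1), hxz⟩
      · rintro ⟨hc, hxz⟩
        exact ⟨by simpa [hL1def] using rank_covBy hrk0 hc, hxz⟩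
    rw [heq]
    exact rat2 b z 0 hrk0 (by simpa [hL2def] using hz) (hble hz)
  have hL2card : L2.ncard = m + 1 := by
    have hdc := double_count L1 L2 (fun x z => x ≤ z) hL1fin hL2fin m m hup hdn
    rw [hL1card] at hdc
    exact Nat.eq_of_mul_eq_mul_right (by omega) hdc.symm
  -- unique missing coatom for each atom
  have hmiss1 : ∀ x ∈ L1, ∃ z0, {z ∈ L2 | ¬ x ≤ z} = {z0} := by
    intro x hx
    apply Set.ncard_eq_one.1
    have hsub : {z ∈ L2 | x ≤ z} ⊆ L2 := Set.sep_subset _ _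
    have hcompl : {z ∈ L2 | ¬ x ≤ z} = L2 \ {z ∈ L2 | x ≤ z} := by
      ext z
      constructor
      · rintro ⟨hz, hnxz⟩
        exact ⟨hz, fun h => hnxz h.2⟩
      · rintro ⟨hz, hn⟩
        exact ⟨hz, fun h => hn ⟨hz, h⟩⟩
    rw [hcompl, Set.ncard_diff hsub (hL2fin.subset hsub), hup x hx, hL2card]
    omega
  have hmiss2 : ∀ z ∈ L2, ∃ x0, {x ∈ L1 | ¬ x ≤ z} = {x0} := by
    intro z hz
    apply Set.ncard_eq_one.1
    have hsub : {x ∈ L1 | x ≤ z} ⊆ L1 := Set.sep_subset _ _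
    have hcompl : {x ∈ L1 | ¬ x ≤ z} = L1 \ {x ∈ L1 | x ≤ z} := by
      ext x
      constructor
      · rintro ⟨hx, hnxz⟩
        exact ⟨hx, fun h => hnxz h.2⟩
      · rintro ⟨hx, hn⟩
        exact ⟨hx, fun h => hn ⟨hx, h⟩⟩
    rw [hcompl, Set.ncard_diff hsub (hL1fin.subset hsub), hdn z hz, hL1card]
    omega
  choose ν0 hν0 using hmiss1
  choose μ0 hμ0 using hmiss2
  -- enumeration of atoms
  have e1 : ↥L1 ≃ Fin (m + 1) :=
    Finite.equivFinOfCardEq (by rw [Nat.card_coe_set_eq, hL1card])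
  set E : Fin (m + 1) → Q := fun i => ((e1.symm i : ↥L1) : Q) with hEdef
  have hEmem : ∀ i, E i ∈ L1 := fun i => (e1.symm i).2
  have hEinj : Function.Injective E := by
    intro i j h
    have := Subtype.ext (p := fun x => x ∈ L1) h
    exact e1.symm.injective this
  have hEsurj : ∀ x ∈ L1, ∃ i, E i = x := fun x hx =>
    ⟨e1 ⟨x, hx⟩, by simp [hEdef]⟩
  set ν : Fin (m + 1) → Q := fun i => ν0 (E i) (hEmem i) with hνdef
  have hκ : ∀ (i : Fin (m + 1)) (z : Q), z ∈ L2 → (¬ E i ≤ z ↔ z = ν i) := by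
    intro i z hz
    constructor
    · intro hn
      have : z ∈ {z ∈ L2 | ¬ E i ≤ z} := ⟨hz, hn⟩
      rw [hν0 (E i) (hEmem i)] at this
      exact this
    · rintro rfl
      have : ν i ∈ {z ∈ L2 | ¬ E i ≤ z} := by
        rw [hν0 (E i) (hEmem i)]; rfl
      exact this.2
  have hνmem : ∀ i, ν i ∈ L2 := by
    intro i
    have : ν i ∈ {z ∈ L2 | ¬ E i ≤ z} := by
      rw [hν0 (E i) (hEmem i)]; rfl
    exact this.1
  have hκ' : ∀ (z : Q) (hz : z ∈ L2) (x : Q), x ∈ L1 → (¬ x ≤ z ↔ x = μ0 z hz) := by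
    intro z hz x hx
    constructor
    · intro hn
      have : x ∈ {x ∈ L1 | ¬ x ≤ z} := ⟨hx, hn⟩
      rw [hμ0 z hz] at this
      exact this
    · rintro rfl
      have : μ0 z hz ∈ {x ∈ L1 | ¬ x ≤ z} := by
        rw [hμ0 z hz]; rfl
      exact this.2
  have hνinj : Function.Injective ν := by
    intro i j h
    have h1 : E i = μ0 (ν i) (hνmem i) :=
      (hκ' (ν i) (hνmem i) (E i) (hEmem i)).1 ((hκ i (ν i) (hνmem i)).2 rfl)
    have h2 : E j = μ0 (ν j) (hνmem j) :=
      (hκ' (ν j) (hνmem j) (E j) (hEmem j)).1 ((hκ j (ν j) (hνmem j)).2 rfl)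
    apply hEinj
    rw [h1, h2]
    congr 1
  have hνsurj : ∀ z ∈ L2, ∃ i, ν i = z := by
    intro z hz
    obtain ⟨i, hi⟩ := hEsurj (μ0 z hz) (by
      have : μ0 z hz ∈ {x ∈ L1 | ¬ x ≤ z} := by rw [hμ0 z hz]; rfl
      exact this.1)
    have hn : ¬ E i ≤ z := by
      rw [hi]
      have : μ0 z hz ∈ {x ∈ L1 | ¬ x ≤ z} := by rw [hμ0 z hz]; rfl
      exact this.2
    exact ⟨i, ((hκ i z hz).1 hn).symm⟩
  -- the key relation : E i ≤ ν j ↔ i ≠ j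
  have hrel : ∀ i j : Fin (m + 1), E i ≤ ν j ↔ i ≠ j := by
    intro i j
    constructor
    · intro hle h
      subst h
      exact (hκ i (ν i) (hνmem i)).2 rfl hle
    · intro hij
      by_contra hn
      have := (hκ i (ν j) (hνmem j)).1 hn
      exact hij (hνinj this).symm
  -- the map
  set G : T3 m → Q := t3map b t E ν with hGdef
  have hGrk : ∀ a : T3 m, HasRankFrom b (G a) (rk3 a) := by
    intro a
    rcases t3_cases a with rfl | rfl | ⟨p, rfl⟩
    · simpa [hGdef] using hrk0
    · simpa [hGdef] using hrkt
    · obtain ⟨isy, idx⟩ := p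
      rcases Bool.eq_false_or_eq_true isy with h | h <;> subst h
      · simpa [hGdef, hL2def] using hνmem idx
      · simpa [hGdef, hL1def] using hEmem idx
  have hGinj : Function.Injective G := by
    intro a a' h
    have hr : rk3 a = rk3 a' := rank_unique hgr' (h ▸ hGrk a) (hGrk a')
    rcases t3_cases a with rfl | rfl | ⟨p, rfl⟩ <;>
      rcases t3_cases a' with rfl | rfl | ⟨q, rfl⟩
    · rfl
    · simp at hr
    · exact absurd hr (by rcases Bool.eq_false_or_eq_true q.isY with hb | hb <;> simp [hb])
    · simp at hr
    · rfl
    · exact absurd hr (by rcases Bool.eq_false_or_eq_true q.isY with hb | hb <;> simp [hb])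
    · exact absurd hr (by rcases Bool.eq_false_or_eq_true p.isY with hb | hb <;> simp [hb])
    · exact absurd hr (by rcases Bool.eq_false_or_eq_true p.isY with hb | hb <;> simp [hb])
    · obtain ⟨ip, pidx⟩ := p
      obtain ⟨iq, qidx⟩ := q
      rcases Bool.eq_false_or_eq_true ip with hb | hb <;> subst hb <;>
        rcases Bool.eq_false_or_eq_true iq with hb' | hb' <;> subst hb'
      · simp only [t3map_midT', hGdef] at h
        rw [hνinj h]
      · simp at hr
      · simp at hr
      · simp only [t3map_midF, hGdef] at h
        rw [hEinj h]
  have hGsurj : Function.Surjective G := by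
    intro p
    obtain ⟨l, hl⟩ := hne b p (hbd p).1
    have hp : HasRankFrom b p (l.length - 1) := ⟨l, hl, by have := CovChains.length_pos hl; omega⟩
    set n := l.length - 1 with hn
    have hn3 : n ≤ 3 := rank_le_of_le hgr' hne hp hrkt (hbd p).2
    interval_cases n
    · exact ⟨⊥, (heqrk hrk0 hp (hbd p).1)⟩
    · obtain ⟨i, hi⟩ := hEsurj p hp
      exact ⟨midT ⟨false, i⟩, hi⟩
    · obtain ⟨i, hi⟩ := hνsurj p hp
      exact ⟨midT ⟨true, i⟩, hi⟩
    · exact ⟨topT m, (heqrk hp hrkt (hbd p).2).symm⟩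
  have hGle : ∀ a a' : T3 m, G a ≤ G a' ↔ a ≤ a' := by
    intro a a'
    rcases t3_cases a with rfl | rfl | ⟨p, rfl⟩ <;>
      rcases t3_cases a' with rfl | rfl | ⟨q, rfl⟩
    · simp
    · simp only [t3map_bot, t3map_top, hGdef]
      exact iff_of_true (hbd t).1 bot_le
    · exact iff_of_true (hbd _).1 bot_le
    · refine iff_of_false (hnle hrkt hrk0 (by omega)) ?_
      intro h
      have hbot : topT m = (⊥ : T3 m) := le_bot_iff.1 h
      simp only [topT] at hbot
      exact WithBot.coe_ne_bot hbot
    · simp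
    · refine iff_of_false ?_ ?_
      · obtain ⟨iq, qidx⟩ := q
        rcases Bool.eq_false_or_eq_true iq with hb | hb <;> subst hb
        · exact hnle hrkt (by simpa [hGdef, hL2def] using hνmem qidx) (by omega)
        · exact hnle hrkt (by simpa [hGdef, hL1def] using hEmem qidx) (by omega)
      · intro h
        have h2 := le_topT (midT q)
        have : topT m = midT q := le_antisymm h h2
        exact absurd this.symm (by
          intro hh
          have := congrArg rk3 hh
          rcases Bool.eq_false_or_eq_true q.isY with hb | hb <;> simp [hb] at this)
    · refine iff_of_false ?_ ?_
      · obtain ⟨ip, pidx⟩ := p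
        rcases Bool.eq_false_or_eq_true ip with hb | hb <;> subst hb
        · exact hnle (by simpa [hGdef, hL2def] using hνmem pidx) hrk0 (by omega)
        · exact hnle (by simpa [hGdef, hL1def] using hEmem pidx) hrk0 (by omega)
      · intro h
        have := rk3_strictMono _ _ (lt_of_le_of_ne h (by
          intro he
          exact absurd (congrArg rk3 he)
            (by rcases Bool.eq_false_or_eq_true p.isY with hb | hb <;> simp [hb])))
        rcases Bool.eq_false_or_eq_true p.isY with hb | hb <;> simp [hb] at this
    · exact iff_of_true (by
        obtain ⟨ip, pidx⟩ := p
        rcases Bool.eq_false_or_eq_true ip with hb | hb <;> subst hb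
        · exact (hbd _).2
        · exact (hbd _).2) (le_topT _)
    · -- mid vs mid
      obtain ⟨ip, pidx⟩ := p
      obtain ⟨iq, qidx⟩ := q
      rcases Bool.eq_false_or_eq_true ip with hb | hb <;> subst hb <;>
        rcases Bool.eq_false_or_eq_true iq with hb' | hb' <;> subst hb'
      · -- true / true : coatoms
        simp only [t3map_midT', hGdef]
        constructor
        · intro h
          have heq' := heqrk (hνmem pidx) (hνmem qidx) h
          rw [hνinj heq']
        · intro h
          rw [midT_le_midT, mid3_le_iff] at h
          rcases h with heq' | ⟨h1, -, -⟩
          · obtain rfl : pidx = qidx := congrArg Mid3.idx heq'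
            exact le_refl _
          · exact absurd h1 (by simp)
      · -- true / false : coatom ≤ atom : both false
        refine iff_of_false (hnle (by simpa [hGdef, hL2def] using hνmem pidx) (by simpa [hGdef, hL1def] using hEmem qidx)
          (by omega)) ?_
        intro h
        rw [midT_le_midT, mid3_le_iff] at h
        rcases h with heq' | ⟨h1, -, -⟩
        · exact absurd (congrArg Mid3.isY heq') (by simp)
        · exact absurd h1 (by simp)
      · -- false / true : atom ≤ coatom ↔ idx ≠ idx
        simp only [t3map_midF, t3map_midT', hGdef]
        rw [hrel pidx qidx]
        constructor
        · intro h
          rw [midT_le_midT, mid3_le_iff]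
          exact Or.inr ⟨rfl, rfl, by simpa using h⟩
        · intro h
          rw [midT_le_midT, mid3_le_iff] at h
          rcases h with heq' | ⟨-, -, h3⟩
          · exact absurd (congrArg Mid3.isY heq') (by simp)
          · simpa using h3
      · -- false / false : atoms
        simp only [t3map_midF, hGdef]
        constructor
        · intro h
          have heq' := heqrk (hEmem pidx) (hEmem qidx) h
          rw [hEinj heq']
        · intro h
          rw [midT_le_midT, mid3_le_iff] at h
          rcases h with heq' | ⟨-, h2, -⟩
          · obtain rfl : pidx = qidx := congrArg Mid3.idx heq'
            exact le_refl _
          · exact absurd h2 (by simp)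
  let iso : T3 m ≃o Q :=
    { toEquiv := Equiv.ofBijective G ⟨hGinj, hGsurj⟩
      map_rel_iff' := fun {a a'} => hGle a a' }
  exact ⟨iso.symm⟩

end Unique
section Part3
variable {m : ℕ}

lemma A3seqInf_one : A3seqInf m 1 = 1 := rfl
lemma A3seqInf_two : A3seqInf m 2 = m := rfl
lemma A3seqInf_three : A3seqInf m 3 = m + 1 := rfl
lemma A3seqInf_ge4 {k : ℕ} (hk : 4 ≤ k) : A3seqInf m k = m * (m + 1) := by
  unfold A3seqInf
  rw [if_neg (by omega), if_neg (by omega), if_neg (by omega)]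

lemma not_extendable (hm : 3 ≤ m) :
    ¬ ∃ (X : BddPoset) (N : ℕ) (A' : ℕ → ℕ), 4 ≤ N ∧ A' 1 = 1 ∧ A' 2 = m ∧
      A' 3 = m + 1 ∧ IsBinomialIntervalOn X.carrier X.bot X.top A' N := by
  rintro ⟨X, N, A', hN, hA1, hA2, hA3, hfin, hbd, hlenN, hne, hgr, hat⟩
  set b := X.bot
  set t := X.top
  have hrkt : HasRankFrom b t N := by
    obtain ⟨l, hl⟩ := hne b t (hbd t).1
    exact ⟨l, hl, by rw [hlenN l hl]⟩
  obtain ⟨w, hw, -⟩ := exists_rank_le hrkt (k := 4) (by omega)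
  haveI := hfin
  refine core_contradiction b w m hm hgr hne (Set.toFinite _) ?_ hw
  intro x y k hk1 hk3 hch
  rw [hat x y k hk1 hch]
  interval_cases k
  · simpa using hA1
  · simpa using hA2
  · simpa using hA3

lemma cond1_A3seqInf (hm : 3 ≤ m) : Cond1 (A3seqInf m) := by
  refine ⟨rfl, ?_, ?_, ?_⟩
  · intro i hi
    unfold A3seqInf
    split_ifs
    · omega
    · omega
    · omega
    · exact Nat.mul_pos (by omega) (by omega)
  · intro i hi
    match i, hi with
    | 1, _ => simp [A3seqInf]; omega
    | 2, _ =>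
      rw [A3seqInf_two, A3seqInf_three]; omega
    | 3, _ =>
      rw [A3seqInf_three, A3seqInf_ge4 (by omega)]
      nlinarith
    | (n + 4), _ =>
      rw [A3seqInf_ge4 (by omega), A3seqInf_ge4 (by omega)]
  · intro i j hi hj
    rcases Nat.lt_or_ge j 2 with hj2 | hj2
    · -- j = 1
      obtain rfl : j = 1 := by omega
      have h1 : Finset.Icc 1 (i + 1) = insert 1 (Finset.Icc 2 (i + 1)) := by
        ext l
        simp only [Finset.mem_Icc, Finset.mem_insert]
        omega
      have h2 : (∏ l ∈ Finset.Icc 1 (i + 1), A3seqInf m l) =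
          ∏ l ∈ Finset.Icc 2 (i + 1), A3seqInf m l := by
        rw [h1, Finset.prod_insert (by simp), A3seqInf_one, one_mul]
      have h3 : (∏ l ∈ Finset.Icc 1 i, A3seqInf m l) ∣
          ∏ l ∈ Finset.Icc 1 (i + 1), A3seqInf m l := by
        rw [Finset.prod_Icc_succ_top (by omega)]
        exact dvd_mul_right _ _
      rw [show (1 : ℕ) + 1 = 2 by rfl, show 1 + i = i + 1 by omega]
      rw [h2] at h3
      exact h3
    · -- j ≥ 2 : termwise divisibility after shifting
      have hstep : ∀ l ∈ Finset.Icc 1 i, A3seqInf m l ∣ A3seqInf m (j + l) := by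
        intro l hl
        simp only [Finset.mem_Icc] at hl
        match l, hl with
        | 1, _ => simp [A3seqInf_one]
        | 2, _ =>
          rw [A3seqInf_two, A3seqInf_ge4 (by omega)]
          exact dvd_mul_right _ _
        | 3, _ =>
          rw [A3seqInf_three, A3seqInf_ge4 (by omega)]
          exact dvd_mul_left _ _
        | (n + 4), _ =>
          rw [A3seqInf_ge4 (by omega), A3seqInf_ge4 (by omega)]
      have hre : (∏ l ∈ Finset.Icc (j + 1) (j + i), A3seqInf m l) =
          ∏ l ∈ Finset.Icc 1 i, A3seqInf m (j + l) := by
        rw [← Finset.map_add_left_Icc, Finset.prod_map]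
        rfl
      rw [hre]
      exact Finset.prod_dvd_prod_of_dvd _ _ hstep

lemma not_realisable (hm : 3 ≤ m) :
    ¬ ∃ X : BinPoset, IsBinomialPoset X.carrier X.bot (A3seqInf m) := by
  rintro ⟨X, hB⟩
  obtain ⟨w, hw⟩ := hB.allLengths 4
  refine core_contradiction X.bot w m hm hB.graded hB.chain_nonempty (hB.locFin _ _) ?_ hw
  intro x y k hk1 hk3 hch
  rw [hB.atoms x y k hk1 hch]
  interval_cases k
  · simp [A3seqInf_one]
  · simp [A3seqInf_two]
  · simp [A3seqInf_three]

end Part3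

/-- for `m ≥ 2`, the atomic sequence `(1, m, m+1)` is realised, uniquely
up to isomorphism, by the poset `{0̂; x_1,...,x_{m+1}; y_1,...,y_{m+1}; 1̂}` with
`x i < y j` iff `i ≠ j`; for `m ≥ 3`, this interval cannot be extended to any binomial
interval of greater length, and the infinite sequence `(1, m, m+1, (m(m+1))^∞)` satisfies
condition (1) but is not realisable. -/
theorem three_interval_unique_not_extendable (m : ℕ) (hm : 2 ≤ m) :
    IsBinomialIntervalOn (T3 m) (⊥ : T3 m)
      (((⊤ : WithTop (Mid3 m)) : T3 m)) (A3seq m) 3 ∧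
    (∀ X : BddPoset, IsBinomialIntervalOn X.carrier X.bot X.top (A3seq m) 3 →
      Nonempty (X.carrier ≃o T3 m)) ∧
    (3 ≤ m →
      (¬ ∃ (X : BddPoset) (N : ℕ) (A' : ℕ → ℕ), 4 ≤ N ∧ A' 1 = 1 ∧ A' 2 = m ∧
        A' 3 = m + 1 ∧ IsBinomialIntervalOn X.carrier X.bot X.top A' N) ∧
      Cond1 (A3seqInf m) ∧
      ¬ ∃ X : BinPoset, IsBinomialPoset X.carrier X.bot (A3seqInf m)) := by
  refine ⟨?_, ?_, ?_⟩
  · exact t3_binomial (by omega)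
  · intro X hX
    exact t3_unique hm X.carrier X.bot X.top hX
  · intro hm3
    exact ⟨not_extendable hm3, cond1_A3seqInf hm3, not_realisable hm3⟩
end

section
/- If A = (a_i)_{i≥1} is a sequence of positive integers with a_1 = 1 and a_i dividing a_{i+1} for every i, then A is realisable as the atomic sequence of a strongly confluent binomial poset. In particular, every sequence satisfying condition (1) whose limit is a prime power is realisable. -/
open Relation Filter Topology

namespace BinReal

def Good (A : ℕ → ℕ) : Prop :=
  A 1 = 1 ∧ (∀ i, 1 ≤ i → 0 < A i) ∧ ∀ i, 1 ≤ i → A i ∣ A (i + 1)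

variable {A : ℕ → ℕ}

theorem Good.pos (h : Good A) {i : ℕ} (hi : 1 ≤ i) : 0 < A i := h.2.1 i hi

theorem Good.dvd_of_le (h : Good A) {i j : ℕ} (hi : 1 ≤ i) (hij : i ≤ j) : A i ∣ A j := by
  induction j, hij using Nat.le_induction with
  | base => exact dvd_rfl
  | succ n hn ih => exact ih.trans (h.2.2 n (le_trans hi hn))

/-- the modulus attached to rank `m` at coordinate `i`. -/
def modl (A : ℕ → ℕ) (m i : ℕ) : ℕ := if m < i then A i / A (i - m) else 1

theorem modl_pos (h : Good A) (m i : ℕ) : 0 < modl A m i := by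
  unfold modl
  split
  · rename_i hmi
    have h1 : 1 ≤ i - m := by omega
    have h2 : A (i - m) ∣ A i := h.dvd_of_le h1 (by omega)
    exact Nat.div_pos (Nat.le_of_dvd (h.pos (by omega)) h2) (h.pos h1)
  · exact one_pos

theorem modl_le (h : Good A) (m i : ℕ) : modl A m i ≤ A i + 1 := by
  unfold modl
  split
  · exact le_trans (Nat.div_le_self _ _) (Nat.le_succ _)
  · omega

theorem modl_dvd (h : Good A) {m n i : ℕ} (hmn : m ≤ n) (hni : n < i) :
    modl A m i ∣ modl A n i := by
  unfold modl
  rw [if_pos (by omega : m < i), if_pos hni]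
  obtain ⟨k, hk⟩ := h.dvd_of_le (by omega : 1 ≤ i - n) (by omega : i - n ≤ i - m)
  obtain ⟨l, hl⟩ := h.dvd_of_le (by omega : 1 ≤ i - m) (by omega : i - m ≤ i)
  have e1 : A i / A (i - m) = l := by
    rw [hl, Nat.mul_div_cancel_left _ (h.pos (by omega : 1 ≤ i - m))]
  have e2 : A i / A (i - n) = k * l := by
    rw [hl, hk, Nat.mul_assoc, Nat.mul_div_cancel_left _ (h.pos (by omega : 1 ≤ i - n))]
  rw [e1, e2]
  exact dvd_mul_left l k

theorem modl_succ_eq (h : Good A) {m i : ℕ} (hi : m + 1 < i) :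
    modl A (m + 1) i = modl A m i * (A (i - m) / A (i - m - 1)) := by
  have h2 : 2 ≤ i - m := by omega
  obtain ⟨k, hk⟩ := h.dvd_of_le (by omega : 1 ≤ i - m - 1) (by omega : i - m - 1 ≤ i - m)
  obtain ⟨l, hl⟩ := h.dvd_of_le (by omega : 1 ≤ i - m) (by omega : i - m ≤ i)
  unfold modl
  rw [if_pos (by omega : m + 1 < i), if_pos (by omega : m < i)]
  have e0 : i - (m + 1) = i - m - 1 := by omega
  rw [e0]
  have e1 : A i / A (i - m) = l := by
    rw [hl, Nat.mul_div_cancel_left _ (h.pos (by omega : 1 ≤ i - m))]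
  have e2 : A (i - m) / A (i - m - 1) = k := by
    rw [hk, Nat.mul_div_cancel_left _ (h.pos (by omega : 1 ≤ i - m - 1))]
  have e3 : A i / A (i - m - 1) = k * l := by
    rw [hl, hk, Nat.mul_assoc, Nat.mul_div_cancel_left _ (h.pos (by omega : 1 ≤ i - m - 1))]
  rw [e1, e2, e3, Nat.mul_comm]

theorem telescope (h : Good A) : ∀ n, 1 ≤ n →
    (∏ j ∈ Finset.Ioc 1 n, (A j / A (j - 1))) = A n := by
  intro n hn
  induction n, hn using Nat.le_induction with
  | base => simp [h.1]
  | succ n hn ih =>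
    rw [Finset.prod_Ioc_succ_top hn, ih]
    have : n + 1 - 1 = n := by omega
    rw [this, Nat.mul_div_cancel' (h.2.2 n hn)]

/-- the carrier -/
@[ext] structure Pt (A : ℕ → ℕ) (h : Good A) : Type where
  rk : ℕ
  f : ℕ → ℕ
  bounds : ∀ i, f i < modl A rk i
  evz : ∃ N, ∀ i, N ≤ i → f i = 0

variable {h : Good A}

instance : PartialOrder (Pt A h) where
  le x y := x.rk ≤ y.rk ∧ ∀ i, y.rk < i → x.f i = y.f i % modl A x.rk i
  le_refl x := ⟨le_rfl, fun i _ => (Nat.mod_eq_of_lt (x.bounds i)).symm⟩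
  le_trans x y z hxy hyz := by
    refine ⟨hxy.1.trans hyz.1, fun i hi => ?_⟩
    have hyi : y.rk < i := lt_of_le_of_lt hyz.1 hi
    rw [hxy.2 i hyi, hyz.2 i hi, Nat.mod_mod_of_dvd _ (modl_dvd h hxy.1 hyi)]
  le_antisymm x y hxy hyx := by
    have hrk : x.rk = y.rk := le_antisymm hxy.1 hyx.1
    ext i
    · exact hrk
    · by_cases hi : y.rk < i
      · rw [hxy.2 i hi, hrk, Nat.mod_eq_of_lt (y.bounds i)]
      · have h1 : x.f i < 1 := by
          have := x.bounds i; unfold modl at this; rwa [if_neg (by omega)] at this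
        have h2 : y.f i < 1 := by
          have := y.bounds i; unfold modl at this; rwa [if_neg (by omega)] at this
        omega

theorem le_def {x y : Pt A h} :
    x ≤ y ↔ x.rk ≤ y.rk ∧ ∀ i, y.rk < i → x.f i = y.f i % modl A x.rk i := Iff.rfl

theorem Pt.f_zero (x : Pt A h) {i : ℕ} (hi : i ≤ x.rk) : x.f i = 0 := by
  have := x.bounds i; unfold modl at this; rw [if_neg (by omega)] at this; omega

theorem eq_of_le_of_rk_eq {x y : Pt A h} (hxy : x ≤ y) (hrk : y.rk ≤ x.rk) : x = y := by
  have hr : x.rk = y.rk := le_antisymm hxy.1 hrk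
  ext i
  · exact hr
  · by_cases hi : y.rk < i
    · rw [hxy.2 i hi, hr, Nat.mod_eq_of_lt (y.bounds i)]
    · rw [x.f_zero (by omega), y.f_zero (by omega)]

theorem lt_iff_rk {x y : Pt A h} : x < y ↔ x ≤ y ∧ x.rk < y.rk := by
  constructor
  · intro hlt
    refine ⟨hlt.le, ?_⟩
    rcases lt_or_ge x.rk y.rk with hc | hc
    · exact hc
    · exact absurd (eq_of_le_of_rk_eq hlt.le hc) hlt.ne
  · rintro ⟨hle, hrk⟩
    exact lt_of_le_of_ne hle (fun he => by rw [he] at hrk; omega)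

theorem exists_step {x y : Pt A h} (hxy : x ≤ y) (hr : x.rk + 1 ≤ y.rk) :
    ∃ z : Pt A h, x ≤ z ∧ z ≤ y ∧ z.rk = x.rk + 1 := by
  obtain ⟨N, hN⟩ := y.evz
  refine ⟨⟨x.rk + 1,
    fun i => if y.rk < i then y.f i % modl A (x.rk + 1) i else
      if x.rk + 1 < i then x.f i else 0, ?_, ?_⟩, ?_, ?_, rfl⟩
  · intro i
    split
    · exact Nat.mod_lt _ (modl_pos h _ _)
    · split
      · exact lt_of_lt_of_le (x.bounds i)
          (Nat.le_of_dvd (modl_pos h _ _) (modl_dvd h (Nat.le_succ _) (by assumption)))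
      · exact modl_pos h _ _
  · refine ⟨max N (y.rk + 1), fun i hi => ?_⟩
    rw [if_pos (by omega), hN i (by omega), Nat.zero_mod]
  · refine le_def.2 ⟨Nat.le_succ _, fun i hi => ?_⟩
    dsimp only
    by_cases hyi : y.rk < i
    · rw [if_pos hyi, Nat.mod_mod_of_dvd _ (modl_dvd h (Nat.le_succ _) (by omega)),
        ← (le_def.1 hxy).2 i hyi]
    · rw [if_neg hyi, if_pos hi, Nat.mod_eq_of_lt (x.bounds i)]
  · refine le_def.2 ⟨hr, fun i hi => ?_⟩
    dsimp only
    rw [if_pos hi]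

theorem covby_iff {x y : Pt A h} : x ⋖ y ↔ x ≤ y ∧ y.rk = x.rk + 1 := by
  constructor
  · intro hc
    have hlt := lt_iff_rk.1 hc.lt
    refine ⟨hlt.1, ?_⟩
    by_contra hne
    obtain ⟨z, hxz, hzy, hz⟩ := exists_step hlt.1 (by omega)
    exact hc.2 (lt_iff_rk.2 ⟨hxz, by omega⟩) (lt_iff_rk.2 ⟨hzy, by omega⟩)
  · rintro ⟨hle, hrk⟩
    refine ⟨lt_iff_rk.2 ⟨hle, by omega⟩, fun c hxc hcy => ?_⟩
    have h1 := (lt_iff_rk.1 hxc).2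
    have h2 := (lt_iff_rk.1 hcy).2
    omega

theorem chain_spec : ∀ (l : List (Pt A h)) (x y : Pt A h), l.Chain' (· ⋖ ·) →
    l.head? = some x → l.getLast? = some y → x ≤ y ∧ l.length + x.rk = y.rk + 1 := by
  intro l
  induction l with
  | nil => intro x y _ hh _; simp at hh
  | cons a t ih =>
    intro x y hc hh hl
    have hax : a = x := by simpa using hh
    subst hax
    cases t with
    | nil =>
      have : a = y := by simpa using hl
      subst this
      exact ⟨le_rfl, by simp [Nat.add_comm]⟩
    | cons b t' =>
      rw [List.Chain', List.isChain_cons_cons] at hc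
      rw [List.getLast?_cons_cons] at hl
      obtain ⟨hby, hlen⟩ := ih b y hc.2 rfl hl
      have hrk : b.rk = a.rk + 1 := (covby_iff.1 hc.1).2
      refine ⟨(covby_iff.1 hc.1).1.trans hby, ?_⟩
      simp only [List.length_cons] at hlen ⊢
      omega

theorem chain_mem : ∀ (l : List (Pt A h)) (x y : Pt A h), l.Chain' (· ⋖ ·) →
    l.head? = some x → l.getLast? = some y → ∀ p ∈ l, x ≤ p ∧ p ≤ y := by
  intro l
  induction l with
  | nil => intro x y _ hh _; simp at hh
  | cons a t ih =>
    intro x y hc hh hl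
    have hax : a = x := by simpa using hh
    subst hax
    cases t with
    | nil =>
      have : a = y := by simpa using hl
      subst this
      intro p hp
      simp at hp
      subst hp
      exact ⟨le_rfl, le_rfl⟩
    | cons b t' =>
      rw [List.Chain', List.isChain_cons_cons] at hc
      rw [List.getLast?_cons_cons] at hl
      have hIH := ih b y hc.2 rfl hl
      have hay : a ≤ y := ((covby_iff.1 hc.1).1).trans (chain_spec _ b y hc.2 rfl hl).1
      intro p hp
      rcases List.mem_cons.1 hp with rfl | hp
      · exact ⟨le_rfl, hay⟩
      · exact ⟨(covby_iff.1 hc.1).1.trans (hIH p hp).1, (hIH p hp).2⟩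

theorem exists_chain : ∀ (n : ℕ) (x y : Pt A h), x ≤ y → y.rk = x.rk + n →
    ∃ l : List (Pt A h), (l.Chain' (· ⋖ ·) ∧ l.head? = some x ∧ l.getLast? = some y)
      ∧ l.length = n + 1 := by
  intro n
  induction n with
  | zero =>
    intro x y hxy hr
    have : x = y := eq_of_le_of_rk_eq hxy (by omega)
    subst this
    exact ⟨[x], ⟨List.isChain_singleton x, rfl, rfl⟩, rfl⟩
  | succ n ih =>
    intro x y hxy hr
    obtain ⟨z, hxz, hzy, hz⟩ := exists_step hxy (by omega)
    obtain ⟨l', ⟨hc', hh', hl'⟩, hlen'⟩ := ih z y hzy (by omega)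
    refine ⟨x :: l', ⟨?_, rfl, ?_⟩, by simp [hlen']⟩
    · rw [List.Chain', List.isChain_cons]
      refine ⟨fun b hb => ?_, hc'⟩
      rw [hh'] at hb
      have : b = z := by simpa using hb.symm
      subst this
      exact covby_iff.2 ⟨hxz, hz⟩
    · cases l' with
      | nil => simp at hh'
      | cons c t => rw [List.getLast?_cons_cons]; exact hl'

theorem icc_finite (x y : Pt A h) : (Set.Icc x y).Finite := by
  rw [← Set.finite_coe_iff]
  by_cases hxy : x ≤ y
  · set F : ↥(Set.Icc x y) → Fin (y.rk + 1) × ((i : Fin (y.rk + 1)) → Fin (A i.1 + 1)) :=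
      fun z => ⟨⟨z.1.rk, by
          have := (le_def.1 z.2.2).1; omega⟩,
        fun i => ⟨z.1.f i.1, by
          have h1 := z.1.bounds i.1
          have h2 := modl_le h z.1.rk i.1
          omega⟩⟩ with hF
    apply Finite.of_injective F
    intro z1 z2 heq
    have hrk : z1.1.rk = z2.1.rk := by
      have := congrArg Prod.fst heq
      simpa [hF] using this
    have hfn : ∀ i : ℕ, i ≤ y.rk → z1.1.f i = z2.1.f i := by
      intro i hi
      have := congrFun (congrArg Prod.snd heq) ⟨i, by omega⟩
      simpa [hF] using this
    apply Subtype.ext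
    ext i
    · exact hrk
    · by_cases hi : i ≤ y.rk
      · exact hfn i hi
      · have e1 := (le_def.1 z1.2.2).2 i (by omega)
        have e2 := (le_def.1 z2.2.2).2 i (by omega)
        rw [e1, e2, hrk]
  · have : Set.Icc x y = ∅ := by
      ext z
      simp only [Set.mem_Icc, Set.mem_empty_iff_false, iff_false, not_and]
      intro h1 h2
      exact hxy (h1.trans h2)
    rw [this]
    infer_instance

theorem covChains_finite (x y : Pt A h) :
    {l : List (Pt A h) | l.Chain' (· ⋖ ·) ∧ l.head? = some x ∧ l.getLast? = some y}.Finite := by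
  rw [← Set.finite_coe_iff]
  have hIf : Finite ↥(Set.Icc x y) := Set.finite_coe_iff.2 (icc_finite x y)
  set L := y.rk + 1 - x.rk with hL
  set F : ↥{l : List (Pt A h) | l.Chain' (· ⋖ ·) ∧ l.head? = some x ∧ l.getLast? = some y} →
      (Fin L → ↥(Set.Icc x y)) := fun l => fun k =>
    ⟨l.1.getD k.1 x, by
      by_cases hk : k.1 < l.1.length
      · rw [List.getD_eq_getElem l.1 x hk]
        have := chain_mem l.1 x y l.2.1 l.2.2.1 l.2.2.2 (l.1[k.1]) (by
          exact List.getElem_mem hk)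
        exact Set.mem_Icc.2 this
      · rw [List.getD_eq_default l.1 x (by omega)]
        refine Set.mem_Icc.2 ⟨le_rfl, (chain_spec l.1 x y l.2.1 l.2.2.1 l.2.2.2).1⟩⟩
    with hFdef
  apply Finite.of_injective F
  intro l1 l2 heq
  have hlen1 := (chain_spec l1.1 x y l1.2.1 l1.2.2.1 l1.2.2.2).2
  have hlen2 := (chain_spec l2.1 x y l2.2.1 l2.2.2.1 l2.2.2.2).2
  have hne1 : 0 < l1.1.length := by
    cases hc : l1.1 with
    | nil => have := l1.2.2.1; rw [hc] at this; simp at this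
    | cons a t => simp [hc]
  have hne2 : 0 < l2.1.length := by
    cases hc : l2.1 with
    | nil => have := l2.2.2.1; rw [hc] at this; simp at this
    | cons a t => simp [hc]
  have hlen1' : l1.1.length = L := by omega
  have hlen2' : l2.1.length = L := by omega
  apply Subtype.ext
  apply List.ext_getElem (by omega)
  intro i hi1 hi2
  have := congrFun heq ⟨i, by omega⟩
  have h2 := congrArg Subtype.val this
  simp only [hFdef] at h2
  rwa [List.getD_eq_getElem l1.1 x hi1, List.getD_eq_getElem l2.1 x hi2] at h2

theorem card_box (w : ℕ → ℕ) (s : Finset ℕ) (hw : ∀ i ∉ s, w i = 1) :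
    Nat.card {t : ℕ → ℕ // ∀ i, t i < w i} = ∏ i ∈ s, w i := by
  have e : {t : ℕ → ℕ // ∀ i, t i < w i} ≃ ((i : s) → Fin (w i.1)) :=
    { toFun := fun t i => ⟨t.1 i.1, t.2 i.1⟩
      invFun := fun g => ⟨fun i => if hi : i ∈ s then (g ⟨i, hi⟩).1 else 0, by
        intro i
        dsimp only
        by_cases hi : i ∈ s
        · rw [dif_pos hi]; exact (g ⟨i, hi⟩).2
        · rw [dif_neg hi, hw i hi]; omega⟩
      left_inv := by
        intro t
        apply Subtype.ext
        funext i
        by_cases hi : i ∈ s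
        · simp [dif_pos hi]
        · have := t.2 i
          rw [hw i hi] at this
          simp [dif_neg hi]
          omega
      right_inv := by
        intro g
        funext i
        apply Fin.ext
        simp }
  rw [Nat.card_congr e, Nat.card_eq_fintype_card, Fintype.card_pi]
  simp only [Fintype.card_fin]
  exact Finset.prod_coe_sort s w

theorem card_atoms {x y : Pt A h} (n : ℕ) (hxy : x ≤ y) (hr : y.rk = x.rk + n)
    (hn : 1 ≤ n) : Nat.card {z : Pt A h | x ⋖ z ∧ z ≤ y} = A n := by
  classical
  set m := x.rk with hm
  set s : Finset ℕ := Finset.Ioc (m + 1) (m + n) with hs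
  set w : ℕ → ℕ := fun i => if i ∈ s then A (i - m) / A (i - m - 1) else 1 with hwdef
  set G : {z : Pt A h | x ⋖ z ∧ z ≤ y} → {t : ℕ → ℕ // ∀ i, t i < w i} :=
    fun z => ⟨fun i => if i ∈ s then z.1.f i / modl A m i else 0, by
      intro i
      by_cases hi : i ∈ s
      · simp only [hwdef, if_pos hi]
        have hmem := Finset.mem_Ioc.1 hi
        have hb := z.1.bounds i
        have hz1 : z.1.rk = m + 1 := (covby_iff.1 z.2.1).2
        rw [hz1, modl_succ_eq h (by omega)] at hb
        exact (Nat.div_lt_iff_lt_mul (modl_pos h m i)).2 (by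
          rw [Nat.mul_comm]; exact hb)
      · simp only [hwdef, if_neg hi]; omega⟩ with hG
  have hGbij : Function.Bijective G := by
    constructor
    · rintro ⟨z1, hz1⟩ ⟨z2, hz2⟩ heq
      have hfr : ∀ i, (if i ∈ s then z1.f i / modl A m i else 0)
          = (if i ∈ s then z2.f i / modl A m i else 0) := by
        intro i
        exact congrFun (congrArg Subtype.val heq) i
      have hr1 : z1.rk = m + 1 := (covby_iff.1 hz1.1).2
      have hr2 : z2.rk = m + 1 := (covby_iff.1 hz2.1).2
      apply Subtype.ext
      ext i
      · rw [hr1, hr2]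
      · show z1.f i = z2.f i
        by_cases hi1 : i ≤ m + 1
        · rw [z1.f_zero (by omega), z2.f_zero (by omega)]
        · by_cases hi2 : i ≤ m + n
          · have his : i ∈ s := Finset.mem_Ioc.2 ⟨by omega, hi2⟩
            have e1 : x.f i = z1.f i % modl A m i :=
              (le_def.1 (covby_iff.1 hz1.1).1).2 i (by omega)
            have e2 : x.f i = z2.f i % modl A m i :=
              (le_def.1 (covby_iff.1 hz2.1).1).2 i (by omega)
            have d1 := Nat.div_add_mod (z1.f i) (modl A m i)
            have d2 := Nat.div_add_mod (z2.f i) (modl A m i)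
            have hq := hfr i
            rw [if_pos his, if_pos his] at hq
            have hq' : z1.f i / modl A m i = z2.f i / modl A m i := hq
            have hmul : modl A m i * (z1.f i / modl A m i)
                = modl A m i * (z2.f i / modl A m i) := by rw [hq']
            omega
          · have e1 : z1.f i = y.f i % modl A z1.rk i :=
              (le_def.1 hz1.2).2 i (by omega)
            have e2 : z2.f i = y.f i % modl A z2.rk i :=
              (le_def.1 hz2.2).2 i (by omega)
            rw [e1, e2, hr1, hr2]
    · rintro ⟨t, ht⟩
      obtain ⟨Ny, hNy⟩ := y.evz
      have hbounds : ∀ i, (if i ≤ m + 1 then 0 else if i ≤ m + n then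
          x.f i + modl A m i * t i else y.f i % modl A (m + 1) i) < modl A (m + 1) i := by
        intro i
        split
        · exact modl_pos h _ _
        · split
          · rename_i h1 h2
            have his : i ∈ s := Finset.mem_Ioc.2 ⟨by omega, by omega⟩
            have htw := ht i
            rw [hwdef] at htw
            simp only [if_pos his] at htw
            have hxb : x.f i < modl A m i := x.bounds i
            rw [modl_succ_eq h (by omega : m + 1 < i)]
            calc x.f i + modl A m i * t i < modl A m i * (t i + 1) := by
                  rw [Nat.mul_succ]; omega
              _ ≤ modl A m i * (A (i - m) / A (i - m - 1)) :=
                  Nat.mul_le_mul_left _ (by omega)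
          · exact Nat.mod_lt _ (modl_pos h _ _)
      set z : Pt A h := ⟨m + 1, fun i => if i ≤ m + 1 then 0 else if i ≤ m + n then
          x.f i + modl A m i * t i else y.f i % modl A (m + 1) i, hbounds, by
        refine ⟨max Ny (m + n + 1), fun i hi => ?_⟩
        simp only [if_neg (show ¬ i ≤ m + 1 by omega), if_neg (show ¬ i ≤ m + n by omega),
          hNy i (by omega), Nat.zero_mod]⟩ with hz
      have hxz : x ≤ z := by
        refine le_def.2 ⟨by rw [hz]; dsimp only; omega, fun i hi => ?_⟩
        have hi' : m + 1 < i := hi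
        rw [hz]
        dsimp only
        rw [if_neg (by omega)]
        by_cases hi2 : i ≤ m + n
        · rw [if_pos hi2, Nat.add_mul_mod_self_left, Nat.mod_eq_of_lt (x.bounds i)]
        · rw [if_neg hi2, Nat.mod_mod_of_dvd _ (modl_dvd h (Nat.le_succ m) (by omega)),
            ← (le_def.1 hxy).2 i (by omega)]
      have hzy : z ≤ y := by
        refine le_def.2 ⟨by rw [hz]; dsimp only; omega, fun i hi => ?_⟩
        rw [hz]
        dsimp only
        rw [if_neg (by omega), if_neg (by omega)]
      refine ⟨⟨z, covby_iff.2 ⟨hxz, by rw [hz]⟩, hzy⟩, ?_⟩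
      apply Subtype.ext
      funext i
      simp only [hG]
      by_cases hi : i ∈ s
      · rw [if_pos hi]
        have hmem := Finset.mem_Ioc.1 hi
        show z.f i / modl A m i = t i
        rw [hz]
        simp only
        rw [if_neg (by omega), if_pos (by omega),
          Nat.add_mul_div_left _ _ (modl_pos h m i),
          Nat.div_eq_of_lt (x.bounds i), Nat.zero_add]
      · rw [if_neg hi]
        have := ht i
        rw [hwdef] at this
        simp only [if_neg hi] at this
        omega
  rw [Nat.card_eq_of_bijective G hGbij, card_box w s (fun i hi => by
    rw [hwdef]; simp [if_neg hi])]
  have hprod : ∏ i ∈ s, w i = ∏ i ∈ s, (A (i - m) / A (i - m - 1)) := by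
    apply Finset.prod_congr rfl
    intro i hi
    rw [hwdef]
    simp [if_pos hi]
  rw [hprod, hs]
  have hmap : Finset.Ioc (m + 1) (m + n) = (Finset.Ioc 1 n).map (addLeftEmbedding m) := by
    rw [Finset.map_add_left_Ioc]
  rw [hmap, Finset.prod_map]
  have : ∀ j, (addLeftEmbedding m) j = m + j := fun j => rfl
  simp only [this]
  have hsimp : ∀ j, m + j - m = j := fun j => by omega
  simp only [hsimp]
  exact telescope h n hn

def CC (x y : Pt A h) : Set (List (Pt A h)) :=
  {l | l.Chain' (· ⋖ ·) ∧ l.head? = some x ∧ l.getLast? = some y}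

theorem card_chains : ∀ (n : ℕ) (x y : Pt A h), x ≤ y → y.rk = x.rk + n →
    Nat.card (CC x y) = ∏ i ∈ Finset.Icc 1 n, A i := by
  intro n
  induction n with
  | zero =>
    intro x y hxy hr
    have hx : x = y := eq_of_le_of_rk_eq hxy (by omega)
    subst hx
    have hset : CC x x = {[x]} := by
      ext l
      simp only [CC, Set.mem_setOf_eq, Set.mem_singleton_iff]
      constructor
      · rintro ⟨hc, hh, hl⟩
        have hlen := (chain_spec l x x hc hh hl).2
        have hlen1 : l.length = 1 := by omega
        obtain ⟨a, rfl⟩ := List.length_eq_one_iff.1 hlen1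
        have : a = x := by simpa using hh
        rw [this]
      · rintro rfl
        exact ⟨List.isChain_singleton x, rfl, rfl⟩
    rw [hset]
    simp
  | succ n ih =>
    intro x y hxy hr
    set S : Set (Pt A h) := {z : Pt A h | x ⋖ z ∧ z ≤ y} with hS
    have hSfin : S.Finite := by
      apply (icc_finite x y).subset
      rintro z ⟨hz1, hz2⟩
      exact Set.mem_Icc.2 ⟨hz1.le, hz2⟩
    have hfinCC : ∀ z y' : Pt A h, Finite ↥(CC z y') := fun z y' =>
      Set.finite_coe_iff.2 (covChains_finite z y')
    have hSfin' : Finite ↥S := hSfin.to_subtype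
    -- bijection
    set F : (Σ z : ↥S, ↥(CC z.1 y)) → ↥(CC x y) := fun p =>
      ⟨x :: p.2.1, by
        refine ⟨?_, rfl, ?_⟩
        · rw [List.Chain', List.isChain_cons]
          refine ⟨fun b hb => ?_, p.2.2.1⟩
          rw [p.2.2.2.1] at hb
          have : b = p.1.1 := by simpa using hb.symm
          rw [this]
          exact p.1.2.1
        · have hne : p.2.1 ≠ [] := by
            intro e
            have := p.2.2.2.1
            rw [e] at this
            simp at this
          cases hc : p.2.1 with
          | nil => exact absurd hc hne
          | cons c t =>
            rw [List.getLast?_cons_cons]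
            have := p.2.2.2.2
            rwa [hc] at this⟩ with hF
    have hFbij : Function.Bijective F := by
      constructor
      · rintro ⟨⟨z1, hz1⟩, ⟨l1, hl1⟩⟩ ⟨⟨z2, hz2⟩, ⟨l2, hl2⟩⟩ heq
        have h1 : x :: l1 = x :: l2 := congrArg Subtype.val heq
        have h2 : l1 = l2 := by simpa using h1
        subst h2
        have h3 : z1 = z2 := by
          have e1 := hl1.2.1
          have e2 := hl2.2.1
          rw [e1] at e2
          exact Option.some.inj e2
        subst h3
        rfl
      · rintro ⟨l, hl⟩
        have hh := hl.2.1
        have hlast := hl.2.2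
        have hlen := (chain_spec l x y hl.1 hh hlast).2
        have hl2 : l = x :: l.tail := List.eq_cons_of_mem_head? (by rw [hh]; rfl)
        have htne : l.tail ≠ [] := by
          intro e
          rw [hl2, e] at hlen
          simp at hlen
          omega
        obtain ⟨z, t, ht⟩ : ∃ z t, l.tail = z :: t := by
          cases hc : l.tail with
          | nil => exact absurd hc htne
          | cons z t => exact ⟨z, t, rfl⟩
        have hchain : (x :: z :: t).Chain' (· ⋖ ·) := by
          rw [← ht, ← hl2]; exact hl.1
        rw [List.Chain', List.isChain_cons_cons] at hchain
        have hlast' : (z :: t).getLast? = some y := by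
          rw [← ht]
          have : l.getLast? = (x :: z :: t).getLast? := by rw [← ht, ← hl2]
          rw [List.getLast?_cons_cons] at this
          rw [ht, ← this, hlast]
        have hzy : z ≤ y := (chain_spec (z :: t) z y hchain.2 rfl hlast').1
        refine ⟨⟨⟨z, hchain.1, hzy⟩, ⟨z :: t, hchain.2, rfl, hlast'⟩⟩, ?_⟩
        apply Subtype.ext
        show x :: z :: t = l
        rw [← ht, ← hl2]
    -- cardinality
    letI : Fintype ↥S := hSfin.fintype
    letI : ∀ z : ↥S, Fintype ↥(CC z.1 y) := fun z => (covChains_finite z.1 y).fintype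
    rw [← Nat.card_eq_of_bijective F hFbij]
    rw [Nat.card_eq_fintype_card, Fintype.card_sigma]
    have hcards : ∀ z : ↥S, Fintype.card ↥(CC z.1 y) = ∏ i ∈ Finset.Icc 1 n, A i := by
      intro z
      rw [← Nat.card_eq_fintype_card]
      exact ih z.1 y z.2.2 (by
        have := (covby_iff.1 z.2.1).2
        omega)
    rw [Finset.sum_congr rfl (fun z _ => hcards z), Finset.sum_const, Finset.card_univ,
      ← Nat.card_eq_fintype_card]
    rw [show Nat.card ↥S = A (n + 1) from card_atoms (n + 1) hxy hr (by omega)]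
    rw [Finset.prod_Icc_succ_top (by omega : 1 ≤ n + 1)]
    rw [smul_eq_mul, Nat.mul_comm]

/-- the element of rank `n` with all coordinates zero. -/
def topAt (A : ℕ → ℕ) (h : Good A) (n : ℕ) : Pt A h :=
  ⟨n, fun _ => 0, fun i => modl_pos h n i, ⟨0, fun _ _ => rfl⟩⟩

theorem le_topAt (x : Pt A h) {n : ℕ} (hrk : x.rk ≤ n) {N : ℕ}
    (hN : ∀ i, N ≤ i → x.f i = 0) (hn : N ≤ n + 1) : x ≤ topAt A h n := by
  have htop : (topAt A h n).rk = n := rfl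
  refine le_def.2 ⟨by omega, fun i hi => ?_⟩
  rw [htop] at hi
  show x.f i = 0 % modl A x.rk i
  rw [Nat.zero_mod, hN i (by omega)]

theorem covChains_eq (x y : Pt A h) : CovChains x y = CC x y := rfl

theorem main_construction (A : ℕ → ℕ) (h : Good A) :
    IsBinomialPoset (Pt A h) (topAt A h 0) A ∧
      StronglyConfluent (Pt A h) ∧ Infinite (Pt A h) := by
  have hCCmem : ∀ (x y : Pt A h) (l : List (Pt A h)), l ∈ CovChains x y ↔
      l.Chain' (· ⋖ ·) ∧ l.head? = some x ∧ l.getLast? = some y := fun _ _ _ => Iff.rfl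
  refine ⟨⟨?_, ?_, ?_, ?_, ?_, ?_, ?_, ?_⟩, ?_, ?_⟩
  · -- bot_le
    intro x
    refine le_def.2 ⟨Nat.zero_le _, fun i _ => ?_⟩
    show (0 : ℕ) = x.f i % modl A 0 i
    have : modl A 0 i = 1 := by
      unfold modl
      split
      · rename_i hi
        rw [Nat.sub_zero, Nat.div_self (by
          rcases h.2.1 i (by omega) with hp
          exact hp)]
      · rfl
    rw [this, Nat.mod_one]
  · -- directed
    intro x y
    obtain ⟨Nx, hNx⟩ := x.evz
    obtain ⟨Ny, hNy⟩ := y.evz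
    refine ⟨topAt A h (max (max Nx Ny) (max x.rk y.rk)), ?_, ?_⟩
    · exact le_topAt x (by omega) hNx (by omega)
    · exact le_topAt y (by omega) hNy (by omega)
  · exact icc_finite
  · -- chain_nonempty
    intro x y hxy
    have hrk : x.rk ≤ y.rk := (le_def.1 hxy).1
    obtain ⟨l, hl, _⟩ := exists_chain (y.rk - x.rk) x y hxy (by omega)
    exact ⟨l, hl⟩
  · -- graded
    intro x y l hl l' hl'
    have h1 := (chain_spec l x y hl.1 hl.2.1 hl.2.2).2
    have h2 := (chain_spec l' x y hl'.1 hl'.2.1 hl'.2.2).2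
    omega
  · -- allLengths
    intro n
    refine ⟨topAt A h n, ?_⟩
    have hb : topAt A h 0 ≤ topAt A h n :=
      le_topAt _ (Nat.zero_le _) (fun i _ => rfl) (Nat.zero_le _)
    have hr : (topAt A h n).rk = (topAt A h 0).rk + n := by
      show n = 0 + n
      omega
    obtain ⟨l, hl, hlen⟩ := exists_chain n _ _ hb hr
    exact ⟨l, hl, hlen⟩
  · -- count
    intro x y x' y' n h1 h2
    obtain ⟨l, hl, hlen⟩ := h1
    obtain ⟨l', hl', hlen'⟩ := h2
    have s1 := chain_spec l x y hl.1 hl.2.1 hl.2.2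
    have s2 := chain_spec l' x' y' hl'.1 hl'.2.1 hl'.2.2
    rw [covChains_eq, covChains_eq, ← Nat.card_coe_set_eq, ← Nat.card_coe_set_eq,
      card_chains n x y s1.1 (by omega), card_chains n x' y' s2.1 (by omega)]
  · -- atoms
    intro x y n hn hex
    obtain ⟨l, hl, hlen⟩ := hex
    have s1 := chain_spec l x y hl.1 hl.2.1 hl.2.2
    rw [← Nat.card_coe_set_eq]
    exact card_atoms n s1.1 (by omega) hn
  · -- strongly confluent
    refine ⟨topAt A h, ?_, ?_⟩
    · intro i j hij
      refine lt_iff_rk.2 ⟨?_, hij⟩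
      exact le_topAt _ (le_of_lt hij) (fun _ _ => rfl) (Nat.zero_le _)
    · intro p
      obtain ⟨N, hN⟩ := p.evz
      exact ⟨max N p.rk, le_topAt p (le_max_right _ _) hN (by omega)⟩
  · -- infinite
    apply Infinite.of_injective (topAt A h)
    intro i j hij
    exact congrArg Pt.rk hij

end BinReal

/-- any sequence of positive integers with `a 1 = 1` in which each term
divides the next is realisable as the atomic sequence of a strongly confluent binomial
poset; in particular, every sequence satisfying condition (1) whose limit is a prime
power is realisable. -/


theorem divisibility_chain_realisable :
    (∀ A : ℕ → ℕ, A 1 = 1 → (∀ i : ℕ, 1 ≤ i → 0 < A i) →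
      (∀ i : ℕ, 1 ≤ i → A i ∣ A (i + 1)) →
      ∃ X : BinPoset, IsBinomialPoset X.carrier X.bot A ∧
        StronglyConfluent X.carrier ∧ Infinite X.carrier) ∧
    (∀ (A : ℕ → ℕ) (p k : ℕ), Cond1 A → p.Prime →
      (∃ N : ℕ, ∀ i : ℕ, N ≤ i → A i = p ^ k) →
      ∃ X : BinPoset, IsBinomialPoset X.carrier X.bot A ∧
        StronglyConfluent X.carrier ∧ Infinite X.carrier) := by
  have main : ∀ A : ℕ → ℕ, A 1 = 1 → (∀ i : ℕ, 1 ≤ i → 0 < A i) →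
      (∀ i : ℕ, 1 ≤ i → A i ∣ A (i + 1)) →
      ∃ X : BinPoset, IsBinomialPoset X.carrier X.bot A ∧
        StronglyConfluent X.carrier ∧ Infinite X.carrier := by
    intro A h1 h2 h3
    have h : BinReal.Good A := ⟨h1, h2, h3⟩
    obtain ⟨hb, hs, hi⟩ := BinReal.main_construction A h
    exact ⟨⟨BinReal.Pt A h, BinReal.topAt A h 0⟩, hb, hs, hi⟩
  refine ⟨main, ?_⟩
  intro A p k hc hp ⟨N, hN⟩
  apply main A hc.1 hc.2.1
  intro i hi
  -- every A i is a power of p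
  have hpow : ∀ j : ℕ, 1 ≤ j → ∃ e : ℕ, A j = p ^ e := by
    intro j hj
    have hNj : 1 ≤ max N 1 := le_max_right _ _
    have hdvd1 : A j ∣ ∏ l ∈ Finset.Icc 1 j, A l :=
      Finset.dvd_prod_of_mem _ (Finset.mem_Icc.2 ⟨hj, le_rfl⟩)
    have hdvd2 := hc.2.2.2 j (max N 1) hj hNj
    have hconst : ∏ l ∈ Finset.Icc (max N 1 + 1) (max N 1 + j), A l = p ^ (k * j) := by
      rw [Finset.prod_congr rfl (fun l hl => hN l (by
        have := Finset.mem_Icc.1 hl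
        omega)), Finset.prod_const, Nat.card_Icc]
      rw [show max N 1 + j + 1 - (max N 1 + 1) = j by omega, ← pow_mul]
    rw [hconst] at hdvd2
    obtain ⟨e, _, he⟩ := (Nat.dvd_prime_pow hp).1 (hdvd1.trans hdvd2)
    exact ⟨e, he⟩
  obtain ⟨e, he⟩ := hpow i hi
  obtain ⟨e', he'⟩ := hpow (i + 1) (by omega)
  have hle : A i ≤ A (i + 1) := hc.2.2.1 i hi
  rw [he, he'] at hle ⊢
  exact pow_dvd_pow p ((Nat.pow_le_pow_iff_right hp.one_lt).1 hle)
end
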